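/- arXiv:2310.06113 — 10 statements merged into one kernel-verified Lean document; each statement's English description precedes it below -/
import Mathlib

section
/- For every policy class Π ⊆ A^S, the supremum over all stochastic MDPs M over (S, A) of the coverability coefficient C^cov(Π; M) equals the spanning capacity 𝔠(Π); in particular this supremum is attained by a deterministic MDP. -/
open scoped ENNReal

/-- A deterministic MDP over a layered state space. -/
structure DetMDP (S : ℕ → Type) (A : Type) where
  start : S 0
  step : ∀ h : ℕ, S h → A → S (h + 1)

/-- The trajectory of a policy in a deterministic MDP. -/
def DetMDP.traj {S : ℕ → Type} {A : Type} (M : DetMDP S A) (π : ∀ h : ℕ, S h → A) :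
    ∀ h : ℕ, S h
  | 0 => M.start
  | h + 1 => M.step h (M.traj π h) (π h (M.traj π h))

/-- Reachability of a state-action pair at layer `h` by the class `P` in `M`. -/
def Reachable {S : ℕ → Type} {A : Type} (M : DetMDP S A) (P : Set (∀ h : ℕ, S h → A))
    (h : ℕ) (s : S h) (a : A) : Prop :=
  ∃ π ∈ P, M.traj π h = s ∧ π h s = a

/-- Cumulative reachability at layer `h`. -/
noncomputable def Creach {S : ℕ → Type} {A : Type} (M : DetMDP S A)
    (P : Set (∀ h : ℕ, S h → A)) (h : ℕ) : ℕ :=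
  Set.ncard {p : S h × A | Reachable M P h p.1 p.2}

/-- Spanning capacity of `P` with horizon `H`. -/
noncomputable def spanCap (H : ℕ) (S : ℕ → Type) (A : Type)
    (P : Set (∀ h : ℕ, S h → A)) : ℕ :=
  sSup {n : ℕ | ∃ h < H, ∃ M : DetMDP S A, n = Creach M P h}

/-- A stochastic MDP over a layered state space: an initial distribution on layer `0`
and transition kernels between consecutive layers. -/
structure StoMDP (S : ℕ → Type) (A : Type) where
  init : PMF (S 0)
  step : ∀ h : ℕ, S h → A → PMF (S (h + 1))

/-- `M.stateProb π h s` is the probability that the Markov chain induced by running the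
policy `π` in the stochastic MDP `M` is at state `s` at layer `h`. -/
noncomputable def StoMDP.stateProb {S : ℕ → Type} {A : Type} [∀ h, Fintype (S h)]
    (M : StoMDP S A) (π : ∀ h : ℕ, S h → A) : ∀ h : ℕ, S h → ℝ≥0∞
  | 0 => fun s => M.init s
  | h + 1 => fun s' => ∑ s : S h, M.stateProb π h s * M.step h s (π h s) s'

/-- The occupancy measure `d^π_h(s, a) = Pr^π[s_h = s ∧ a_h = a]`. -/
noncomputable def StoMDP.occ {S : ℕ → Type} {A : Type} [∀ h, Fintype (S h)] [DecidableEq A]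
    (M : StoMDP S A) (π : ∀ h : ℕ, S h → A) (h : ℕ) (s : S h) (a : A) : ℝ≥0∞ :=
  M.stateProb π h s * (if π h s = a then 1 else 0)

/-- The coverability coefficient
`C^cov(P; M) = max_{h < H} Σ_{(s,a) ∈ S_h × A} sup_{π ∈ P} d^π_h(s, a)`. -/
noncomputable def Ccov (H : ℕ) {S : ℕ → Type} {A : Type} [∀ h, Fintype (S h)] [Fintype A]
    [DecidableEq A] (M : StoMDP S A) (P : Set (∀ h : ℕ, S h → A)) : ℝ≥0∞ :=
  ⨆ (h : ℕ) (_ : h < H), ∑ p : S h × A, ⨆ (π : ∀ h : ℕ, S h → A) (_ : π ∈ P),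
    M.occ π h p.1 p.2

/-- A deterministic MDP viewed as a stochastic MDP (point-mass initial distribution and
point-mass transition kernels). -/
noncomputable def DetMDP.toSto {S : ℕ → Type} {A : Type} (M : DetMDP S A) : StoMDP S A where
  init := PMF.pure M.start
  step := fun h s a => PMF.pure (M.step h s a)

/-! A stochastic MDP is a mixture of deterministic ones: draw, independently for every layer `j`
and every pair `(s, a)`, a successor of `(s, a)` from `P_j(· | s, a)`. A trajectory meets each
layer once, so the trajectory of a fixed policy in the drawn deterministic MDP has the law of the
Markov chain the policy induces in the stochastic one. Hence `d^π_h(s, a)` is at most the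
probability that `(s, a)` is reachable at layer `h` in the drawn MDP, and summing over `(s, a)`
bounds `C^cov` by an expected cumulative reachability, hence by the spanning capacity. A
deterministic MDP attaining the spanning capacity attains it as a coverability coefficient too. -/

open Finset

namespace PMF

variable {α ι β : Type*}

theorem sum_coe_eq_one [Fintype α] (p : PMF α) : ∑ a, p a = 1 := by
  rw [← p.tsum_coe, tsum_fintype]

theorem sum_toOuterMeasure_le_of_ncard_le [Fintype ι] (p : PMF α) (E : ι → Set α) (n : ℕ)
    (hn : ∀ a, {i | a ∈ E i}.ncard ≤ n) : ∑ i, p.toOuterMeasure (E i) ≤ n := by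
  classical
  simp only [toOuterMeasure_apply]
  rw [← Summable.tsum_finsetSum (fun _ _ => ENNReal.summable)]
  calc ∑' a, ∑ i, (E i).indicator p a = ∑' a, p a * {i | a ∈ E i}.ncard := by
        congr 1; ext a
        simp [Set.indicator_apply, Set.ncard_eq_toFinset_card', Finset.sum_ite, mul_comm]
    _ ≤ ∑' a, p a * n := by gcongr; exact_mod_cast hn _
    _ = n := by rw [ENNReal.tsum_mul_right, p.tsum_coe, one_mul]

variable [Fintype ι] [DecidableEq ι] [Fintype β]

noncomputable def pi (q : ι → PMF β) : PMF (ι → β) :=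
  ofFintype (fun g => ∏ i, q i (g i)) (by simp [← Fintype.prod_sum, sum_coe_eq_one])

theorem map_eval_pi (q : ι → PMF β) (i : ι) : (pi q).map (fun g => g i) = q i := by
  classical
  ext y
  -- the indicator of `g i = y` goes into the `i`-th factor, so the sum over `g` factorizes
  let f : ∀ j, β → ℝ≥0∞ := fun j z =>
    if j = i then (if z = y then q j z else 0) else q j z
  have hf : ∀ g : ι → β, (if g i = y then ∏ j, q j (g j) else 0) = ∏ j, f j (g j) := by
    intro g
    split_ifs with hg
    · refine prod_congr rfl fun j _ => ?_
      by_cases hj : j = i <;> simp [f, hj, hg]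
    · exact (prod_eq_zero (mem_univ i) (by simp [f, hg])).symm
  rw [pi, map_ofFintype, ofFintype_apply, sum_filter, Finset.sum_congr rfl fun g _ => hf g,
    ← Fintype.prod_sum,
    prod_eq_single i (fun j _ hj => by simp [f, hj, sum_coe_eq_one]) (by simp)]
  simp [f]

end PMF

namespace DetMDP

variable {S : ℕ → Type} {A : Type}

def setStep (D : DetMDP S A) (k : ℕ) (G : S k × A → S (k + 1)) : DetMDP S A :=
  ⟨D.start, Function.update D.step k fun s a => G (s, a)⟩

theorem traj_setStep_of_le (D : DetMDP S A) (π : ∀ h, S h → A) {h k : ℕ}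
    (G : S k × A → S (k + 1)) (hk : h ≤ k) : (D.setStep k G).traj π h = D.traj π h := by
  induction h with
  | zero => rfl
  | succ h ih =>
    simp only [traj]
    rw [ih (by omega)]
    simp only [setStep, Function.update_of_ne (by omega : h ≠ k)]

theorem traj_setStep_succ (D : DetMDP S A) (π : ∀ h, S h → A) (h : ℕ)
    (G : S h × A → S (h + 1)) :
    (D.setStep h G).traj π (h + 1) = G (D.traj π h, π h (D.traj π h)) := by
  simp only [traj]
  rw [traj_setStep_of_le D π G le_rfl]
  simp only [setStep, Function.update_self]

theorem stateProb_toSto [∀ h, Fintype (S h)] (D : DetMDP S A) (π : ∀ h, S h → A) (h : ℕ) :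
    D.toSto.stateProb π h = PMF.pure (D.traj π h) := by
  induction h with
  | zero => rfl
  | succ h ih =>
    ext s'
    simp only [StoMDP.stateProb]
    rw [sum_eq_single (D.traj π h) (fun s _ hs => by simp [ih, hs]) (by simp), ih]
    simp [toSto, traj]

end DetMDP

section SpanningCapacity

variable {S : ℕ → Type} {A : Type} [∀ h, Fintype (S h)] [Fintype A]

theorem Creach_le_card (D : DetMDP S A) (P : Set (∀ h, S h → A)) (h : ℕ) :
    Creach D P h ≤ Fintype.card (S h × A) :=
  (Set.ncard_le_ncard (Set.subset_univ _)).trans_eq (by simp [Set.ncard_univ])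

theorem bddAbove_Creach (H : ℕ) (P : Set (∀ h, S h → A)) :
    BddAbove {n : ℕ | ∃ h < H, ∃ D : DetMDP S A, n = Creach D P h} := by
  refine ⟨(range H).sup fun h => Fintype.card (S h × A), ?_⟩
  rintro _ ⟨h, hh, D, rfl⟩
  exact (Creach_le_card D P h).trans
    (le_sup (f := fun h => Fintype.card (S h × A)) (mem_range.mpr hh))

theorem Creach_le_spanCap {H h : ℕ} {P : Set (∀ h, S h → A)} (hh : h < H) (D : DetMDP S A) :
    Creach D P h ≤ spanCap H S A P :=
  le_csSup (bddAbove_Creach H P) ⟨h, hh, D, rfl⟩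

theorem exists_Creach_eq_spanCap [∀ h, Nonempty (S h)] {H : ℕ} (P : Set (∀ h, S h → A))
    (hH : 0 < H) :
    ∃ h < H, ∃ D : DetMDP S A, Creach D P h = spanCap H S A P := by
  have hne : {n : ℕ | ∃ h < H, ∃ D : DetMDP S A, n = Creach D P h}.Nonempty :=
    ⟨_, 0, hH, ⟨Classical.arbitrary _, fun _ _ _ => Classical.arbitrary _⟩, rfl⟩
  obtain ⟨h, hh, D, hD⟩ := Nat.sSup_mem hne (bddAbove_Creach H P)
  exact ⟨h, hh, D, hD.symm⟩

theorem Creach_le_Ccov_toSto [DecidableEq A] {H h : ℕ} {P : Set (∀ h, S h → A)} (hh : h < H)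
    (D : DetMDP S A) :
    (Creach D P h : ℝ≥0∞) ≤ Ccov H D.toSto P := by
  classical
  have hreach : ∀ p ∈ {p : S h × A | Reachable D P h p.1 p.2}.toFinset,
      1 ≤ ⨆ π ∈ P, D.toSto.occ π h p.1 p.2 := by
    intro p hp
    obtain ⟨π, hπ, hs, ha⟩ := Set.mem_toFinset.mp hp
    refine le_iSup₂_of_le π hπ ?_
    simp [StoMDP.occ, D.stateProb_toSto, hs, ha]
  calc (Creach D P h : ℝ≥0∞)
      = ∑ _p ∈ {p : S h × A | Reachable D P h p.1 p.2}.toFinset, 1 := by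
        simp [Creach, Set.ncard_eq_toFinset_card']
    _ ≤ ∑ p ∈ {p : S h × A | Reachable D P h p.1 p.2}.toFinset,
          ⨆ π ∈ P, D.toSto.occ π h p.1 p.2 := sum_le_sum hreach
    _ ≤ ∑ p : S h × A, ⨆ π ∈ P, D.toSto.occ π h p.1 p.2 :=
        sum_le_sum_of_subset (subset_univ _)
    _ ≤ Ccov H D.toSto P := le_iSup₂_of_le h hh le_rfl

end SpanningCapacity

namespace StoMDP

variable {S : ℕ → Type} {A : Type} [∀ h, Fintype (S h)] [Fintype A]

open Classical in
noncomputable def layerLaw (M : StoMDP S A) (k : ℕ) : PMF (S k × A → S (k + 1)) :=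
  PMF.pi fun p => M.step k p.1 p.2

theorem map_eval_layerLaw (M : StoMDP S A) (k : ℕ) (p : S k × A) :
    (M.layerLaw k).map (fun G => G p) = M.step k p.1 p.2 := by
  classical
  exact PMF.map_eval_pi _ p

/-- The law of a deterministic MDP whose start state and transitions of layers `j < k` are drawn
from `M`, each pair `(s, a)` independently; layers `j ≥ k` are fixed to `f₀`. -/
noncomputable def detLaw (M : StoMDP S A) (f₀ : ∀ j, S j → A → S (j + 1)) :
    ℕ → PMF (DetMDP S A)
  | 0 => M.init.map fun s => ⟨s, f₀⟩
  | k + 1 => (M.detLaw f₀ k).bind fun D => (M.layerLaw k).map (D.setStep k)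

theorem map_traj_detLaw_apply (M : StoMDP S A) (f₀ : ∀ j, S j → A → S (j + 1))
    (π : ∀ h, S h → A) (h : ℕ) (s : S h) :
    (M.detLaw f₀ h).map (fun D => D.traj π h) s = M.stateProb π h s := by
  induction h with
  | zero =>
    rw [detLaw, PMF.map_comp]
    exact congrArg (· s) (PMF.map_id M.init)
  | succ h ih =>
    have hstep : ∀ D : DetMDP S A, ((M.layerLaw h).map (D.setStep h)).map
        (fun D => D.traj π (h + 1)) = M.step h (D.traj π h) (π h (D.traj π h)) := by
      intro D
      rw [PMF.map_comp, ← map_eval_layerLaw M h (D.traj π h, _)]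
      congr 1
      ext G
      exact D.traj_setStep_succ π h G
    rw [detLaw, PMF.map_bind]
    simp only [hstep]
    change ((M.detLaw f₀ h).bind ((fun s => M.step h s (π h s)) ∘ fun D => D.traj π h)) s = _
    rw [← PMF.bind_map, PMF.bind_apply, tsum_fintype]
    simp only [ih, stateProb]

theorem occ_le_detLaw_reachable [DecidableEq A] (M : StoMDP S A)
    (f₀ : ∀ j, S j → A → S (j + 1)) {P : Set (∀ h, S h → A)} {π : ∀ h, S h → A}
    (hπ : π ∈ P)
    (h : ℕ) (s : S h) (a : A) :
    M.occ π h s a ≤ (M.detLaw f₀ h).toOuterMeasure {D | Reachable D P h s a} := by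
  rw [occ]
  split_ifs with ha
  · rw [mul_one, ← map_traj_detLaw_apply M f₀, ← PMF.toOuterMeasure_apply_singleton,
      PMF.toOuterMeasure_map_apply]
    exact MeasureTheory.measure_mono fun D hD => ⟨π, hπ, hD, hD ▸ ha⟩
  · simp

theorem Ccov_le_spanCap [DecidableEq A] [∀ h, Nonempty (S h)] (M : StoMDP S A) (H : ℕ)
    (P : Set (∀ h, S h → A)) : Ccov H M P ≤ spanCap H S A P := by
  let f₀ : ∀ j, S j → A → S (j + 1) := fun _ _ _ => Classical.arbitrary _
  refine iSup₂_le fun h hh => ?_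
  calc ∑ p : S h × A, ⨆ π ∈ P, M.occ π h p.1 p.2
      ≤ ∑ p : S h × A, (M.detLaw f₀ h).toOuterMeasure {D | Reachable D P h p.1 p.2} :=
        sum_le_sum fun p _ => iSup₂_le fun π hπ => M.occ_le_detLaw_reachable f₀ hπ h p.1 p.2
    _ ≤ spanCap H S A P :=
        PMF.sum_toOuterMeasure_le_of_ncard_le _ _ _ fun D => Creach_le_spanCap hh D

end StoMDP

theorem iSup_Ccov_eq_spanCap_general (H : ℕ) (hH : 1 ≤ H) (S : ℕ → Type) (A : Type)
    [∀ h, Fintype (S h)] [∀ h, Nonempty (S h)] [Fintype A] [DecidableEq A]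
    (P : Set (∀ h : ℕ, S h → A)) :
    (⨆ M : StoMDP S A, Ccov H M P) = (spanCap H S A P : ℝ≥0∞) ∧
      ∃ M : DetMDP S A, Ccov H M.toSto P = (spanCap H S A P : ℝ≥0∞) := by
  obtain ⟨h₀, hh₀, D₀, hD₀⟩ := exists_Creach_eq_spanCap P hH
  have hD₀_attains : Ccov H D₀.toSto P = spanCap H S A P :=
    le_antisymm (D₀.toSto.Ccov_le_spanCap H P) (hD₀ ▸ Creach_le_Ccov_toSto hh₀ D₀)
  refine ⟨le_antisymm (iSup_le fun M => M.Ccov_le_spanCap H P) ?_, D₀, hD₀_attains⟩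
  exact hD₀_attains ▸ le_iSup (fun M => Ccov H M P) D₀.toSto

/-- For every policy class `P`, the supremum over all stochastic MDPs `M`
of the coverability coefficient `C^cov(P; M)` equals the spanning capacity `𝔠(P)`;
in particular this supremum is attained by a deterministic MDP. -/
theorem iSup_Ccov_eq_spanCap (H : ℕ) (hH : 1 ≤ H) (S : ℕ → Type) (A : Type)
    [∀ h, Fintype (S h)] [∀ h, Nonempty (S h)] [Fintype A] [DecidableEq A] [Nonempty A]
    (P : Set (∀ h : ℕ, S h → A)) :
    (⨆ M : StoMDP S A, Ccov H M P) = (spanCap H S A P : ℝ≥0∞) ∧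
      ∃ M : DetMDP S A, Ccov H M.toSto P = (spanCap H S A P : ℝ≥0∞) :=
  iSup_Ccov_eq_spanCap_general H hH S A P
end

section
/- Let ℓ ≥ 1 and let Π_ℓ be the ℓ-ton policy class. Then for every layer h ∈ [H] the maximum over deterministic MDPs M over (S, A) of C^reach_h(Π_ℓ; M) is at most 2h^ℓ; consequently the spanning capacity satisfies 𝔠(Π_ℓ) ≤ 2H^ℓ. -/
/-- The `ℓ`-ton policy class over the grid state space with `K` states per layer and binary
actions: for each set `I` of at most `ℓ` states (a state is a pair `⟨h, i⟩` of a layer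
`h < H` and an index `i ∈ [K]`), the policy `π_I` takes action `1` (`true`) exactly on
the states of `I` and action `0` (`false`) elsewhere. -/
def ltonClass (K H ℓ : ℕ) : Set (∀ _ : ℕ, Fin K → Bool) :=
  {π | ∃ I : Finset ((_ : ℕ) × Fin K), I.card ≤ ℓ ∧ (∀ p ∈ I, p.1 < H) ∧
        π = fun h s => decide (⟨h, s⟩ ∈ I)}

section Aux
variable {K : ℕ}

/-- Trajectory determined by an action sequence. -/
def seqTraj (M : DetMDP (fun _ => Fin K) Bool) (f : ℕ → Bool) : ℕ → Fin K
  | 0 => M.start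
  | h + 1 => M.step h (seqTraj M f h) (f h)

lemma traj_eq_seqTraj (M : DetMDP (fun _ => Fin K) Bool) (π : ∀ _ : ℕ, Fin K → Bool) :
    ∀ h, M.traj π h = seqTraj M (fun j => π j (M.traj π j)) h := by
  intro h
  induction h with
  | zero => rfl
  | succ h ih =>
      show M.step h (M.traj π h) (π h (M.traj π h)) = _
      rw [seqTraj, ih]

lemma seqTraj_congr (M : DetMDP (fun _ => Fin K) Bool) (f g : ℕ → Bool) :
    ∀ h, (∀ j < h, f j = g j) → seqTraj M f h = seqTraj M g h := by
  intro h
  induction h with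
  | zero => intro _; rfl
  | succ h ih =>
      intro hfg
      rw [seqTraj, seqTraj, ih (fun j hj => hfg j (hj.trans (Nat.lt_succ_self h))),
        hfg h (Nat.lt_succ_self h)]

/-- Encoding of a small finset of `Fin h` as an `ℓ`-tuple in `Fin (h+1)`. -/
def encSet {h : ℕ} (ℓ : ℕ) (J : Finset (Fin h)) (i : Fin ℓ) : Fin (h + 1) :=
  ((J.sort (· ≤ ·)).map Fin.castSucc).getD i (Fin.last h)

lemma mem_iff_encSet {h ℓ : ℕ} (J : Finset (Fin h)) (hJ : J.card ≤ ℓ) (x : Fin h) :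
    x ∈ J ↔ ∃ i : Fin ℓ, encSet ℓ J i = x.castSucc := by
  constructor
  · intro hx
    have hx' : x ∈ J.sort (· ≤ ·) := (Finset.mem_sort _).2 hx
    obtain ⟨n, hn, hget⟩ := List.getElem_of_mem hx'
    have hlen : (J.sort (· ≤ ·)).length = J.card := Finset.length_sort _
    refine ⟨⟨n, lt_of_lt_of_le (hlen ▸ hn) hJ⟩, ?_⟩
    have hn' : n < ((J.sort (· ≤ ·)).map Fin.castSucc).length := by
      simpa using hn
    rw [encSet]
    simp only [List.getD_eq_getElem _ _ hn', List.getElem_map, hget]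
  · rintro ⟨i, hi⟩
    by_cases hn : (i : ℕ) < ((J.sort (· ≤ ·)).map Fin.castSucc).length
    · rw [encSet, List.getD_eq_getElem _ _ hn, List.getElem_map] at hi
      have hn2 : (i : ℕ) < (J.sort (· ≤ ·)).length := by simpa using hn
      have := Fin.castSucc_injective _ hi
      have hmem : (J.sort (· ≤ ·))[(i:ℕ)]'hn2 ∈ J.sort (· ≤ ·) := List.getElem_mem _
      rw [this] at hmem
      exact (Finset.mem_sort _).1 hmem
    · rw [encSet, List.getD_eq_default _ _ (Nat.le_of_not_lt hn)] at hi
      exact absurd hi.symm (Fin.castSucc_lt_last x).ne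

lemma encSet_inj {h ℓ : ℕ} {J J' : Finset (Fin h)} (hJ : J.card ≤ ℓ) (hJ' : J'.card ≤ ℓ)
    (he : encSet ℓ J = encSet ℓ J') : J = J' := by
  ext x
  rw [mem_iff_encSet J hJ x, mem_iff_encSet J' hJ' x, he]

/-- indicator of a finset of `Fin h` as a function `ℕ → Bool`. -/
def indJ {h : ℕ} (J : Finset (Fin h)) (j : ℕ) : Bool :=
  decide (∃ x ∈ J, (x : ℕ) = j)

lemma key_lemma (H ℓ : ℕ) (M : DetMDP (fun _ => Fin K) Bool) (h : ℕ)
    (π : ∀ _ : ℕ, Fin K → Bool) (hπ : π ∈ ltonClass K H ℓ) :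
    ∃ J : Finset (Fin h), J.card ≤ ℓ ∧ M.traj π h = seqTraj M (indJ J) h := by
  obtain ⟨I, hIcard, -, hπI⟩ := hπ
  set J : Finset (Fin h) := Finset.univ.filter (fun j : Fin h => π j (M.traj π j) = true)
    with hJdef
  have hmemJ : ∀ j : Fin h, j ∈ J ↔ π j (M.traj π j) = true := by
    intro j; simp [hJdef]
  refine ⟨J, ?_, ?_⟩
  · refine le_trans (Finset.card_le_card_of_injOn
      (fun j : Fin h => (⟨(j : ℕ), M.traj π j⟩ : (_ : ℕ) × Fin K)) ?_ ?_) hIcard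
    · intro j hj
      have hthis := (hmemJ j).1 hj
      have hpj : π (j:ℕ) (M.traj π (j:ℕ)) =
          decide ((⟨(j:ℕ), M.traj π (j:ℕ)⟩ : (_ : ℕ) × Fin K) ∈ I) := by
        nth_rw 1 [hπI]
      rw [hpj] at hthis
      simpa using hthis
    · intro j₁ _ j₂ _ hEq
      exact Fin.ext (congrArg Sigma.fst hEq)
  · rw [traj_eq_seqTraj]
    refine seqTraj_congr M _ _ h ?_
    intro j hj
    have : indJ J j = π (⟨j, hj⟩ : Fin h) (M.traj π (⟨j, hj⟩ : Fin h)) := by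
      rw [indJ]
      cases hb : π (⟨j, hj⟩ : Fin h) (M.traj π (⟨j, hj⟩ : Fin h)) with
      | false =>
          apply decide_eq_false
          rintro ⟨x, hx, hxj⟩
          have hxe : x = (⟨j, hj⟩ : Fin h) := Fin.ext hxj
          rw [hxe, hmemJ, hb] at hx
          simp at hx
      | true => exact decide_eq_true ⟨⟨j, hj⟩, (hmemJ _).2 hb, rfl⟩
    exact this.symm

end Aux

/-- For the `ℓ`-ton class `Π_ℓ`: in every deterministic MDP the cumulative
reachability at (`0`-indexed) layer `h` is at most `2·(h+1)^ℓ` (paper: `2h^ℓ` for the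
`1`-indexed layer); consequently `𝔠(Π_ℓ) ≤ 2·H^ℓ`. -/
theorem lton_spanning (K H ℓ : ℕ) (hH : 1 ≤ H) (hℓ : 1 ≤ ℓ) :
    (∀ M : DetMDP (fun _ => Fin K) Bool, ∀ h < H,
        Creach M (ltonClass K H ℓ) h ≤ 2 * (h + 1) ^ ℓ) ∧
      spanCap H (fun _ => Fin K) Bool (ltonClass K H ℓ) ≤ 2 * H ^ ℓ := by
  classical
  have main : ∀ M : DetMDP (fun _ => Fin K) Bool, ∀ h : ℕ,
      Creach M (ltonClass K H ℓ) h ≤ 2 * (h + 1) ^ ℓ := by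
    intro M h
    rw [Creach, ← Nat.card_coe_set_eq]
    have card_target : Nat.card ((Fin ℓ → Fin (h + 1)) × Bool) = 2 * (h + 1) ^ ℓ := by
      simp [Nat.card_eq_fintype_card, mul_comm]
    rw [← card_target]
    have hch : ∀ p : {p : Fin K × Bool // Reachable M (ltonClass K H ℓ) h p.1 p.2},
        ∃ J : Finset (Fin h), J.card ≤ ℓ ∧ (p : Fin K × Bool).1 = seqTraj M (indJ J) h := by
      rintro ⟨⟨s, a⟩, π, hπ, htraj, hact⟩
      obtain ⟨J, hJc, hJt⟩ := key_lemma H ℓ M h π hπ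
      exact ⟨J, hJc, by rw [← htraj, hJt]⟩
    choose Jf hJc hJt using hch
    apply Nat.card_le_card_of_injective (fun p => (encSet ℓ (Jf p), (p : Fin K × Bool).2))
    intro p q hpq
    have hpq' : ((encSet ℓ (Jf p), (p : Fin K × Bool).2) : (Fin ℓ → Fin (h + 1)) × Bool)
        = (encSet ℓ (Jf q), (q : Fin K × Bool).2) := hpq
    have h1 : encSet ℓ (Jf p) = encSet ℓ (Jf q) := (Prod.ext_iff.mp hpq').1
    have h2 : (p : Fin K × Bool).2 = (q : Fin K × Bool).2 := (Prod.ext_iff.mp hpq').2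
    have hJ : Jf p = Jf q := encSet_inj (hJc p) (hJc q) h1
    have hs : (p : Fin K × Bool).1 = (q : Fin K × Bool).1 := by
      rw [hJt p, hJt q, hJ]
    exact Subtype.ext (Prod.ext hs h2)
  refine ⟨fun M h _ => main M h, ?_⟩
  refine csSup_le' ?_
  rintro n ⟨h, hh, M, rfl⟩
  calc Creach M (ltonClass K H ℓ) h ≤ 2 * (h + 1) ^ ℓ := main M h
    _ ≤ 2 * H ^ ℓ :=
      Nat.mul_le_mul_left 2 (Nat.pow_le_pow_left (Nat.succ_le_of_lt hh) ℓ)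
end

section
/- Let Π_1-act be the 1-active policy class. Then for every deterministic MDP M over (S, A) and every layer h ∈ [H], the number of states of S_h reachable by some π ∈ Π_1-act in M is at most h; consequently the spanning capacity satisfies 𝔠(Π_1-act) ≤ 2H. -/
/-- The `1`-active policy class over the grid state space with `K + 1` states per layer and
binary actions: for each bit sequence `b`, the policy `π_b` plays `b h` on the
distinguished state `s_(1,h)` (index `0`) of each layer `h` and action `0` (`false`) on
every other state. -/
def oneActiveClass (K : ℕ) : Set (∀ _ : ℕ, Fin (K + 1) → Bool) :=
  {π | ∃ b : ℕ → Bool, π = fun h s => if s = 0 then b h else false}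

/-!
A policy of the 1-active class plays action `0` everywhere except at the distinguished state
`s_(1,h)`, where it plays its free bit. Hence every state reachable at layer `h + 1` is either
`T_h(s, 0)` for a state `s` reachable at layer `h`, or the single extra state `T_h(s_(1,h), 1)`;
by induction at most `h + 1` states are reachable at (`0`-indexed) layer `h`, and with two
actions per state at most `2 (h + 1) ≤ 2 H` state-action pairs.
-/

namespace DetMDP

variable {S : ℕ → Type} {A : Type}

def reachableStates (M : DetMDP S A) (P : Set (∀ h : ℕ, S h → A)) (h : ℕ) : Set (S h) :=
  {s | ∃ a, Reachable M P h s a}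

lemma traj_mem_reachableStates (M : DetMDP S A) {P : Set (∀ h : ℕ, S h → A)}
    {π : ∀ h : ℕ, S h → A} (hπ : π ∈ P) (h : ℕ) : M.traj π h ∈ M.reachableStates P h :=
  ⟨_, π, hπ, rfl, rfl⟩

lemma creach_le_ncard_reachableStates_mul (M : DetMDP S A) (P : Set (∀ h : ℕ, S h → A))
    (h : ℕ) [Finite (S h)] [Finite A] :
    Creach M P h ≤ (M.reachableStates P h).ncard * Nat.card A := by
  have hsub : {p : S h × A | Reachable M P h p.1 p.2} ⊆ M.reachableStates P h ×ˢ Set.univ :=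
    fun p hp => ⟨⟨p.2, hp⟩, trivial⟩
  calc Creach M P h ≤ (M.reachableStates P h ×ˢ (Set.univ : Set A)).ncard :=
        Set.ncard_le_ncard hsub
    _ = (M.reachableStates P h).ncard * Nat.card A := by
        rw [Set.ncard_prod, Set.ncard_univ]

end DetMDP

lemma spanCap_le {H : ℕ} {S : ℕ → Type} {A : Type} {P : Set (∀ h : ℕ, S h → A)} {n : ℕ}
    (hP : ∀ h < H, ∀ M : DetMDP S A, Creach M P h ≤ n) : spanCap H S A P ≤ n :=
  csSup_le' <| by
    rintro _ ⟨h, hh, M, rfl⟩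
    exact hP h hh M

section OneActive

variable {K : ℕ} (M : DetMDP (fun _ => Fin (K + 1)) Bool)

lemma traj_succ_mem_of_mem_oneActiveClass {π : ∀ _ : ℕ, Fin (K + 1) → Bool}
    (hπ : π ∈ oneActiveClass K) (h : ℕ) :
    M.traj π (h + 1) ∈ insert (M.step h 0 true)
      ((fun s => M.step h s false) '' M.reachableStates (oneActiveClass K) h) := by
  have hreach := M.traj_mem_reachableStates hπ h
  simp only [DetMDP.traj]
  generalize M.traj π h = s at hreach ⊢
  obtain ⟨b, rfl⟩ := hπ
  by_cases h0 : s = 0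
  · subst h0
    cases hb : b h
    · exact Or.inr ⟨0, hreach, by simp [hb]⟩
    · exact Or.inl (by simp [hb])
  · exact Or.inr ⟨s, hreach, by simp [h0]⟩

lemma ncard_reachableStates_oneActiveClass_le (h : ℕ) :
    (M.reachableStates (oneActiveClass K) h).ncard ≤ h + 1 := by
  induction h with
  | zero =>
    have hsub : M.reachableStates (oneActiveClass K) 0 ⊆ {M.start} := by
      rintro _ ⟨_, π, -, rfl, -⟩
      rfl
    simpa using Set.ncard_le_ncard hsub
  | succ h ih =>
    have hsub : M.reachableStates (oneActiveClass K) (h + 1) ⊆ insert (M.step h 0 true)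
        ((fun s => M.step h s false) '' M.reachableStates (oneActiveClass K) h) := by
      rintro _ ⟨_, π, hπ, rfl, -⟩
      exact traj_succ_mem_of_mem_oneActiveClass M hπ h
    calc _ ≤ _ := Set.ncard_le_ncard hsub
      _ ≤ ((fun s => M.step h s false) '' M.reachableStates (oneActiveClass K) h).ncard + 1 :=
        Set.ncard_insert_le _ _
      _ ≤ h + 1 + 1 := by grw [Set.ncard_image_le, ih]

end OneActive

theorem oneActive_spanning_general (K H : ℕ) :
    (∀ M : DetMDP (fun _ => Fin (K + 1)) Bool, ∀ h < H,
        Set.ncard {s : Fin (K + 1) | ∃ a : Bool, Reachable M (oneActiveClass K) h s a}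
          ≤ h + 1) ∧
      spanCap H (fun _ => Fin (K + 1)) Bool (oneActiveClass K) ≤ 2 * H := by
  refine ⟨fun M h _ => ncard_reachableStates_oneActiveClass_le M h, spanCap_le fun h hh M => ?_⟩
  calc Creach M (oneActiveClass K) h
      ≤ (M.reachableStates (oneActiveClass K) h).ncard * Nat.card Bool :=
        M.creach_le_ncard_reachableStates_mul _ h
    _ ≤ (h + 1) * 2 := by
        rw [Nat.card_eq_fintype_card, Fintype.card_bool]
        grw [ncard_reachableStates_oneActiveClass_le M h]
    _ ≤ 2 * H := by omega

/-- For the `1`-active class `Π_1-act`: in every deterministic MDP the number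
of states of (`0`-indexed) layer `h` reachable by some policy of the class is at most
`h + 1` (paper: at most `h` for the `1`-indexed layer); consequently
`𝔠(Π_1-act) ≤ 2·H`. -/
theorem oneActive_spanning (K H : ℕ) (hH : 1 ≤ H) :
    (∀ M : DetMDP (fun _ => Fin (K + 1)) Bool, ∀ h < H,
        Set.ncard {s : Fin (K + 1) | ∃ a : Bool, Reachable M (oneActiveClass K) h s a}
          ≤ h + 1) ∧
      spanCap H (fun _ => Fin (K + 1)) Bool (oneActiveClass K) ≤ 2 * H :=
  oneActive_spanning_general K H
end

section
/- Let Π_act be the all-active policy class. Then for every deterministic MDP M over (S, A) and every layer h ∈ [H], the cumulative reachability satisfies C^reach_h(Π_act; M) ≤ h(h−1) + 2; consequently the spanning capacity satisfies 𝔠(Π_act) ≤ H(H−1) + 2. -/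
/-- The all-active policy class over the grid state space with `K + 1` states per layer and
binary actions: the union over `j` of the classes `Π^j_act`, where a policy of `Π^j_act`
plays `b h` on the state `s_(j,h)` of each layer `h` (for some bit sequence `b`) and
action `0` (`false`) on every other state. -/
def allActiveClass (K : ℕ) : Set (∀ _ : ℕ, Fin (K + 1) → Bool) :=
  {π | ∃ j : Fin (K + 1), ∃ b : ℕ → Bool, π = fun h s => if s = j then b h else false}

/-!
A policy of `Π^j_act` follows the passive trajectory `τ = M.passive` (always play `false`)
until it plays `true` at the state `j`, which it can only do at a layer `t` with `τ t = j`.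
Hence a pair reachable at layer `h` either lies over `τ h` (two pairs), or comes from
`Π^{τ t}` for some `t < h`. The states `Π^j` can occupy at layer `h` form a set of at most
`h + 1` elements containing `τ h`, and off `j` its policies play `false`; so each `t < h`
contributes at most `h + 1` further pairs, for a total of `2 + h (h + 1)`.
-/

variable {σ : Type} [DecidableEq σ]

def activePolicy (j : σ) (b : ℕ → Bool) : ℕ → σ → Bool :=
  fun h s => if s = j then b h else false

variable (σ) in
def allActive : Set (ℕ → σ → Bool) :=
  {π | ∃ j b, π = activePolicy j b}

theorem allActiveClass_eq_allActive (K : ℕ) : allActiveClass K = allActive (Fin (K + 1)) :=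
  rfl

theorem spanCap_le_of_forall_creach_le {S : ℕ → Type} {A : Type} {H n : ℕ}
    {P : Set (∀ h : ℕ, S h → A)} (hP : ∀ h < H, ∀ M : DetMDP S A, Creach M P h ≤ n) :
    spanCap H S A P ≤ n :=
  csSup_le' <| by
    rintro _ ⟨h, hh, M, rfl⟩
    exact hP h hh M

namespace DetMDP

variable (M : DetMDP (fun _ => σ) Bool)

def passive : ℕ → σ :=
  M.traj fun _ _ => false

def activeReach (j : σ) : ℕ → Finset σ
  | 0 => {M.start}
  | t + 1 => (activeReach j t).image (M.step t · false) ∪ {M.step t j true}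

theorem card_activeReach_le (j : σ) (t : ℕ) : (M.activeReach j t).card ≤ t + 1 := by
  induction t with
  | zero => simp [activeReach]
  | succ t ih =>
    calc (M.activeReach j (t + 1)).card
        ≤ ((M.activeReach j t).image (M.step t · false)).card + 1 :=
          (Finset.card_union_le _ _).trans (by simp)
      _ ≤ t + 1 + 1 := by grw [Finset.card_image_le, ih]

theorem passive_mem_activeReach (j : σ) (t : ℕ) : M.passive t ∈ M.activeReach j t := by
  induction t with
  | zero => simp [activeReach, passive, traj]
  | succ t ih => exact Finset.mem_union_left _ (Finset.mem_image_of_mem _ ih)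

theorem traj_activePolicy_mem_activeReach (j : σ) (b : ℕ → Bool) (t : ℕ) :
    M.traj (activePolicy j b) t ∈ M.activeReach j t := by
  induction t with
  | zero => simp [activeReach, traj]
  | succ t ih =>
    simp only [traj, activeReach, Finset.mem_union, Finset.mem_image, Finset.mem_singleton]
    by_cases hj : M.traj (activePolicy j b) t = j
    · cases hb : b t
      · exact .inl ⟨_, ih, by simp [activePolicy, hj, hb]⟩
      · exact .inr (by simp [activePolicy, hj, hb])
    · exact .inl ⟨_, ih, by simp [activePolicy, hj]⟩

theorem traj_activePolicy_eq_passive {j : σ} (b : ℕ → Bool) {h : ℕ}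
    (hj : ∀ t < h, M.passive t ≠ j) : M.traj (activePolicy j b) h = M.passive h := by
  induction h with
  | zero => rfl
  | succ h ih =>
    have hτ : M.traj (activePolicy j b) h = M.passive h :=
      ih fun t ht => hj t (Nat.lt_succ_of_lt ht)
    simp only [traj, hτ, activePolicy, if_neg (hj h (Nat.lt_succ_self h))]
    rfl

/-- Contains the pairs at layer `h` that `Π^{τ t}` reaches off the passive state `τ h`. -/
def deviationPairs (h t : ℕ) : Finset (σ × Bool) :=
  (M.activeReach (M.passive t) h).erase (M.passive h) ×ˢ {false} ∪ {(M.passive t, true)}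

theorem card_deviationPairs_le (h t : ℕ) : (M.deviationPairs h t).card ≤ h + 1 := by
  have hmem := M.passive_mem_activeReach (M.passive t) h
  have hcard := M.card_activeReach_le (M.passive t) h
  calc (M.deviationPairs h t).card
      ≤ ((M.activeReach (M.passive t) h).erase (M.passive h)).card + 1 := by
        refine (Finset.card_union_le _ _).trans_eq ?_
        rw [Finset.card_product, Finset.card_singleton, Finset.card_singleton, mul_one]
    _ ≤ h + 1 := by
        rw [Finset.card_erase_of_mem hmem]
        omega

theorem reachable_allActive_subset (h : ℕ) :
    {p : σ × Bool | Reachable M (allActive σ) h p.1 p.2} ⊆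
      ↑(({M.passive h} ×ˢ Finset.univ) ∪ (Finset.range h).biUnion (M.deviationPairs h)) := by
  rintro ⟨s, a⟩ ⟨_, ⟨j, b, rfl⟩, hs, ha⟩
  dsimp only at hs ha
  simp only [Finset.coe_union, Finset.coe_biUnion, Finset.coe_product, Set.mem_union,
    Set.mem_prod, Finset.mem_coe, Finset.mem_singleton, Finset.mem_univ, and_true,
    Finset.mem_range, Set.mem_iUnion, exists_prop]
  by_cases hτ : s = M.passive h
  · exact .inl hτ
  obtain ⟨t, ht, rfl⟩ : ∃ t < h, M.passive t = j := by
    by_contra! hj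
    exact hτ (hs ▸ M.traj_activePolicy_eq_passive b hj)
  refine .inr ⟨t, ht, ?_⟩
  have hR : s ∈ M.activeReach (M.passive t) h := hs ▸ M.traj_activePolicy_mem_activeReach _ b h
  simp only [activePolicy] at ha
  simp only [deviationPairs, Finset.mem_union, Finset.mem_product, Finset.mem_erase,
    Finset.mem_singleton, Prod.mk.injEq]
  split_ifs at ha with hsj
  · cases a
    · exact .inl ⟨⟨hτ, hR⟩, rfl⟩
    · exact .inr ⟨hsj, rfl⟩
  · exact .inl ⟨⟨hτ, hR⟩, ha.symm⟩

theorem creach_allActive_le (h : ℕ) : Creach M (allActive σ) h ≤ (h + 1) * h + 2 := by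
  calc Creach M (allActive σ) h
      ≤ (({M.passive h} ×ˢ Finset.univ) ∪ (Finset.range h).biUnion (M.deviationPairs h)).card :=
        (Set.ncard_le_ncard (M.reachable_allActive_subset h) (Finset.finite_toSet _)).trans
          (Set.ncard_coe_finset _).le
    _ ≤ 2 + ∑ t ∈ Finset.range h, (M.deviationPairs h t).card := by
        refine (Finset.card_union_le _ _).trans (add_le_add ?_ Finset.card_biUnion_le)
        simp
    _ ≤ 2 + ∑ _t ∈ Finset.range h, (h + 1) := by
        gcongr with t
        exact M.card_deviationPairs_le h t
    _ = (h + 1) * h + 2 := by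
        rw [Finset.sum_const, Finset.card_range, smul_eq_mul]
        ring

end DetMDP

/-- Layers are `0`-indexed: layer `h` here is the paper's layer `h + 1`. -/
theorem allActive_spanning_general (K H : ℕ) :
    (∀ M : DetMDP (fun _ => Fin (K + 1)) Bool, ∀ h < H,
        Creach M (allActiveClass K) h ≤ (h + 1) * h + 2) ∧
      spanCap H (fun _ => Fin (K + 1)) Bool (allActiveClass K) ≤ H * (H - 1) + 2 := by
  rw [allActiveClass_eq_allActive]
  refine ⟨fun M h _ => M.creach_allActive_le h, spanCap_le_of_forall_creach_le ?_⟩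
  intro h hH M
  calc Creach M (allActive _) h ≤ (h + 1) * h + 2 := M.creach_allActive_le h
    _ ≤ H * (H - 1) + 2 := by
        gcongr
        all_goals omega

/-- For the all-active class `Π_act`: in every deterministic MDP the
cumulative reachability at (`0`-indexed) layer `h` is at most `(h+1)·h + 2` (paper:
`h(h−1) + 2` for the `1`-indexed layer); consequently `𝔠(Π_act) ≤ H·(H−1) + 2`. -/
theorem allActive_spanning (K H : ℕ) (hH : 1 ≤ H) :
    (∀ M : DetMDP (fun _ => Fin (K + 1)) Bool, ∀ h < H,
        Creach M (allActiveClass K) h ≤ (h + 1) * h + 2) ∧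
      spanCap H (fun _ => Fin (K + 1)) Bool (allActiveClass K) ≤ H * (H - 1) + 2 :=
  allActive_spanning_general K H
end

section
/- For every ℓ ≥ 1, the ℓ-ton policy class Π_ℓ is an (H+1, ℓ)-sunflower: the core Π_core = {π_0} ∪ {π_h : h ∈ [H]}, where π_0 is identically 0 and π_h(s) = 1 if and only if s ∈ S_h, together with the petal sets S_{π_I} = I, witnesses this. -/
/-- A partial trajectory from layer `h` to layer `h'` is given by states `σ i ∈ S i` and
actions `α i` for `h ≤ i ≤ h'`; it is consistent with the policy `π` if `π` takes action
`α i` on the state `σ i` for every `h ≤ i ≤ h'`. -/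
def Consistent {S : ℕ → Type} {A : Type} (π : ∀ h : ℕ, S h → A)
    (σ : ∀ i : ℕ, S i) (α : ℕ → A) (h h' : ℕ) : Prop :=
  ∀ i : ℕ, h ≤ i → i ≤ h' → π i (σ i) = α i

/-- `π` is an `Sbar`-petal on the policy set `core` (for horizon `H`): every partial
trajectory from layer `h` to layer `h'` (with `h ≤ h' < H`, `0`-indexed) that is
consistent with `π` is either consistent with some member of `core`, or visits a state of
`Sbar` at some layer `i` with `h < i ≤ h'`.  States are recorded as pairs `⟨i, s⟩` of a
layer and a state of that layer. -/
def IsPetal (H : ℕ) {S : ℕ → Type} {A : Type} (core : Set (∀ h : ℕ, S h → A))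
    (Sbar : Set ((i : ℕ) × S i)) (π : ∀ h : ℕ, S h → A) : Prop :=
  ∀ h h' : ℕ, h ≤ h' → h' < H → ∀ (σ : ∀ i : ℕ, S i) (α : ℕ → A),
    Consistent π σ α h h' →
      (∃ π' ∈ core, Consistent π' σ α h h') ∨ (∃ i : ℕ, h < i ∧ i ≤ h' ∧ ⟨i, σ i⟩ ∈ Sbar)

/-- The policy class `P` is a `(K, D)`-sunflower: there is a core of at most `K` policies
such that every `π ∈ P` is an `S_π`-petal on the core for some set `S_π` of at most `D`
states. -/
def IsSunflower (H : ℕ) {S : ℕ → Type} {A : Type} (K D : ℕ)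
    (P : Set (∀ h : ℕ, S h → A)) : Prop :=
  ∃ core : Set (∀ h : ℕ, S h → A), core.Finite ∧ core.ncard ≤ K ∧
    ∀ π ∈ P, ∃ Sbar : Set ((i : ℕ) × S i), Sbar.Finite ∧ Sbar.ncard ≤ D ∧
      IsPetal H core Sbar π

/-- The core policy set `{π_0} ∪ {π_h : h < H}`, where `π_0` is identically `0` (`false`)
and `π_h` takes action `1` (`true`) exactly on the states of layer `h`. -/
def coreClass (K H : ℕ) : Set (∀ _ : ℕ, Fin K → Bool) :=
  insert (fun _ _ => false) {π | ∃ h < H, π = fun i _ => decide (i = h)}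

/- Given a trajectory consistent with `π_I` that avoids `I` strictly after its first layer `h`,
every later action is `0`, so it is consistent with `π_h` if `⟨h, σ h⟩ ∈ I` and with `π_0`
otherwise; `π_h` is in the core because `h ≤ h' < H`. -/

theorem Consistent.of_eqOn {S : ℕ → Type} {A : Type} {π π' : ∀ h : ℕ, S h → A}
    {σ : ∀ i : ℕ, S i} {α : ℕ → A} {h h' : ℕ} (hπ : Consistent π σ α h h')
    (heq : ∀ i, h ≤ i → i ≤ h' → π' i (σ i) = π i (σ i)) : Consistent π' σ α h h' :=
  fun i hi hi' => (heq i hi hi').trans (hπ i hi hi')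

def layerPolicy (K h : ℕ) : ℕ → Fin K → Bool := fun i _ => decide (i = h)

theorem coreClass_eq (K H : ℕ) :
    coreClass K H = insert (fun _ _ => false) (layerPolicy K '' ↑(Finset.range H)) := by
  ext π
  simp only [coreClass, Set.mem_insert_iff, Set.mem_ofPred_eq, Set.mem_image,
    Finset.coe_range, Set.mem_Iio]
  exact or_congr_right ⟨fun ⟨h, hh, e⟩ => ⟨h, hh, e.symm⟩, fun ⟨h, hh, e⟩ => ⟨h, hh, e.symm⟩⟩

theorem coreClass_finite (K H : ℕ) : (coreClass K H).Finite := by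
  rw [coreClass_eq]
  exact ((Finset.range H).finite_toSet.image _).insert _

theorem ncard_coreClass_le (K H : ℕ) : (coreClass K H).ncard ≤ H + 1 := by
  rw [coreClass_eq]
  calc _ ≤ (layerPolicy K '' ↑(Finset.range H)).ncard + 1 := Set.ncard_insert_le _ _
    _ ≤ (↑(Finset.range H) : Set ℕ).ncard + 1 := by
        gcongr; exact Set.ncard_image_le (Finset.range H).finite_toSet
    _ = H + 1 := by rw [Set.ncard_coe_finset, Finset.card_range]

theorem isPetal_coreClass (K H : ℕ) (I : Finset ((_ : ℕ) × Fin K)) :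
    IsPetal (S := fun _ => Fin K) H (coreClass K H) ↑I (fun h s => decide (⟨h, s⟩ ∈ I)) := by
  intro h h' hhh' hh'H σ α hπ
  by_cases hvisit : ∃ i, h < i ∧ i ≤ h' ∧ (⟨i, σ i⟩ : (_ : ℕ) × Fin K) ∈ I
  · exact Or.inr hvisit
  push Not at hvisit
  left
  by_cases hh : (⟨h, σ h⟩ : (_ : ℕ) × Fin K) ∈ I
  · refine ⟨layerPolicy K h, Or.inr ⟨h, by omega, rfl⟩, hπ.of_eqOn fun i hi hi' => ?_⟩
    rcases hi.eq_or_lt with rfl | hlt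
    · simp [layerPolicy, hh]
    · simp [layerPolicy, hvisit i hlt hi', hlt.ne']
  · refine ⟨fun _ _ => false, Or.inl rfl, hπ.of_eqOn fun i hi hi' => ?_⟩
    rcases hi.eq_or_lt with rfl | hlt
    · simp [hh]
    · simp [hvisit i hlt hi']

theorem lton_sunflower_general (K H ℓ : ℕ) :
    (coreClass K H).ncard ≤ H + 1 ∧
      (∀ I : Finset ((_ : ℕ) × Fin K), I.card ≤ ℓ → (∀ p ∈ I, p.1 < H) →
        IsPetal (S := fun _ => Fin K) H (coreClass K H) (↑I)
          (fun h s => decide (⟨h, s⟩ ∈ I))) ∧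
      IsSunflower (S := fun _ => Fin K) H (H + 1) ℓ (ltonClass K H ℓ) := by
  refine ⟨ncard_coreClass_le K H, fun I _ _ => isPetal_coreClass K H I,
    coreClass K H, coreClass_finite K H, ncard_coreClass_le K H, ?_⟩
  rintro π ⟨I, hIℓ, -, rfl⟩
  exact ⟨↑I, I.finite_toSet, by rwa [Set.ncard_coe_finset], isPetal_coreClass K H I⟩

/-- For every `ℓ ≥ 1`, the `ℓ`-ton class `Π_ℓ` is an `(H+1, ℓ)`-sunflower,
witnessed by the core `{π_0} ∪ {π_h : h ∈ [H]}` and the petal sets `S_{π_I} = I`. -/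
theorem lton_sunflower (K H ℓ : ℕ) (hH : 1 ≤ H) (hℓ : 1 ≤ ℓ) :
    (coreClass K H).ncard ≤ H + 1 ∧
      (∀ I : Finset ((_ : ℕ) × Fin K), I.card ≤ ℓ → (∀ p ∈ I, p.1 < H) →
        IsPetal (S := fun _ => Fin K) H (coreClass K H) (↑I)
          (fun h s => decide (⟨h, s⟩ ∈ I))) ∧
      IsSunflower (S := fun _ => Fin K) H (H + 1) ℓ (ltonClass K H ℓ) :=
  lton_sunflower_general K H ℓ
end

section
/- Let the layered state space be the complete binary tree of depth H, namely S_h = {0,1}^{h−1} for h ∈ [H], with action set A = {0,1}, and for each action sequence a = (a_1, …, a_H) ∈ {0,1}^H let π_a be the policy that plays a_h at the h-th state of the root-to-leaf path determined by a (the state (a_1, …, a_{h−1}) ∈ S_h) and plays 0 at every other state. Then the class Π = {π_a : a ∈ {0,1}^H} satisfies: (i) 𝔠(Π) = 2^H; and (ii) Π is a (K, D)-sunflower with K ≤ H + 1 and D = H, witnessed by Π_core = {π_0} ∪ {π_h : h ∈ [H]} (with π_0 identically 0 and π_h(s) = 1 iff s ∈ S_h) and petal sets S_{π_a} equal to the set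 of states on the path of a. Thus a (poly(H), poly(H))-sunflower can have spanning capacity 2^H. -/
/-- The binary-tree state space: layer `h` (`0`-indexed) consists of the bit strings of
length `h`, i.e. `S_h = {0,1}^{h}` (paper: `S_h = {0,1}^{h-1}` with `1`-indexed layers). -/
abbrev TreeState (h : ℕ) : Type := Fin h → Bool

/-- For a bit sequence `a`, `treePolicy a` plays `a h` at the `h`-th state of the
root-to-leaf path determined by `a` (the state `(a_0, …, a_{h-1})`) and plays `0`
(`false`) at every other state. -/
def treePolicy (a : ℕ → Bool) : ∀ h : ℕ, TreeState h → Bool :=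
  fun h s => if ∀ i : Fin h, s i = a i then a h else false

/-- The policy class `Π = {π_a : a ∈ {0,1}^H}` of path policies on the binary tree. -/
def treeClass : Set (∀ h : ℕ, TreeState h → Bool) :=
  {π | ∃ a : ℕ → Bool, π = treePolicy a}

/-- The set of states on the root-to-leaf path of `a` (one state per layer `h < H`). -/
def pathSet (H : ℕ) (a : ℕ → Bool) : Set ((i : ℕ) × TreeState i) :=
  {q | q.1 < H ∧ ∀ i : Fin q.1, q.2 i = a i}

/-- The core policy set `{π_0} ∪ {π_h : h < H}`, where `π_0` is identically `0` and `π_h`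
takes action `1` exactly on the states of layer `h`. -/
def treeCore (H : ℕ) : Set (∀ h : ℕ, TreeState h → Bool) :=
  insert (fun _ _ => false) {π | ∃ h < H, π = fun i _ => decide (i = h)}

/-!
The first `h + 1` actions of `π_a` already determine the pair it reaches at layer `h` in any
deterministic MDP, so at most `2 ^ (h + 1)` pairs are reachable there. The MDP that records
the history, `T_h(s, b) = s ++ [b]`, realises all `2 ^ h * 2` pairs at layer `h`, giving the
capacity `2 ^ H` at the last layer. For the sunflower property, a partial trajectory of `π_a`
that avoids the path of `a` after its first layer plays `0` from then on, so it is consistent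
with `π_0` or with the core policy `π_h` of its first layer `h`.
-/

namespace DetMDP

variable {S : ℕ → Type} {A : Type}

theorem traj_congr (M : DetMDP S A) {π π' : ∀ h, S h → A} :
    ∀ h, (∀ i < h, π i = π' i) → M.traj π h = M.traj π' h
  | 0, _ => rfl
  | h + 1, hπ => by
      have ih := M.traj_congr h fun i hi => hπ i (hi.trans h.lt_succ_self)
      simp only [traj, ih, hπ h h.lt_succ_self]

end DetMDP

section Reachability

variable {S : ℕ → Type} {A : Type}

theorem setOf_reachable_eq_image (M : DetMDP S A) (P : Set (∀ h, S h → A)) (h : ℕ) :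
    {p : S h × A | Reachable M P h p.1 p.2} =
      (fun π => (M.traj π h, π h (M.traj π h))) '' P := by
  ext ⟨s, c⟩
  simp only [Reachable, Set.mem_ofPred_eq, Set.mem_image, Prod.mk.injEq]
  constructor
  · rintro ⟨π, hπ, rfl, rfl⟩
    exact ⟨π, hπ, rfl, rfl⟩
  · rintro ⟨π, hπ, rfl, rfl⟩
    exact ⟨π, hπ, rfl, rfl⟩

theorem creach_le_of_forall_exists_eqOn {β : Type} [Finite β] (M : DetMDP S A)
    {P : Set (∀ h, S h → A)} {h : ℕ} (f : β → ∀ h, S h → A)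
    (hf : ∀ π ∈ P, ∃ b, ∀ i ≤ h, π i = f b i) : Creach M P h ≤ Nat.card β := by
  let reached : (∀ h, S h → A) → S h × A := fun π => (M.traj π h, π h (M.traj π h))
  have hsub : reached '' P ⊆ (reached ∘ f) '' Set.univ := by
    rintro _ ⟨π, hπ, rfl⟩
    obtain ⟨b, hb⟩ := hf π hπ
    have htraj := M.traj_congr h fun i hi => hb i hi.le
    exact ⟨b, trivial, by simp only [Function.comp, reached, htraj, hb h le_rfl]⟩
  calc Creach M P h ≤ ((reached ∘ f) '' Set.univ).ncard := by
        rw [Creach, setOf_reachable_eq_image]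
        exact Set.ncard_le_ncard hsub (Set.finite_univ.image _)
    _ ≤ (Set.univ : Set β).ncard := Set.ncard_image_le Set.finite_univ
    _ = Nat.card β := Set.ncard_univ β

end Reachability

theorem treePolicy_congr {a a' : ℕ → Bool} {h : ℕ} (ha : ∀ i ≤ h, a i = a' i) :
    treePolicy a h = treePolicy a' h := by
  funext s
  have hpath : (∀ i : Fin h, s i = a i) ↔ ∀ i : Fin h, s i = a' i :=
    forall_congr' fun i => by rw [ha i i.isLt.le]
  simp only [treePolicy, hpath, ha h le_rfl]

theorem creach_treeClass_le (M : DetMDP TreeState Bool) (h : ℕ) :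
    Creach M treeClass h ≤ 2 ^ (h + 1) := by
  let extend : (Fin (h + 1) → Bool) → ℕ → Bool := fun b i =>
    if hi : i < h + 1 then b ⟨i, hi⟩ else false
  have hf : ∀ π ∈ treeClass, ∃ b, ∀ i ≤ h, π i = treePolicy (extend b) i := by
    rintro _ ⟨a, rfl⟩
    refine ⟨fun i => a i, fun i hi => treePolicy_congr fun j hj => ?_⟩
    simp only [extend, dif_pos (show j < h + 1 by omega)]
  simpa using creach_le_of_forall_exists_eqOn M _ hf

def treeMDP : DetMDP TreeState Bool where
  start := Fin.elim0
  step _ s b := Fin.snoc s b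

theorem treeMDP_traj_treePolicy (a : ℕ → Bool) :
    ∀ h, treeMDP.traj (treePolicy a) h = fun i : Fin h => a i
  | 0 => funext fun i => i.elim0
  | h + 1 => by
      have hplay : treePolicy a h (fun i : Fin h => a i) = a h := if_pos fun _ => rfl
      rw [DetMDP.traj, treeMDP_traj_treePolicy a h, hplay]
      funext i
      induction i using Fin.lastCases <;> simp [treeMDP]

theorem creach_treeMDP (h : ℕ) : Creach treeMDP treeClass h = 2 ^ (h + 1) := by
  have hall : {p : TreeState h × Bool | Reachable treeMDP treeClass h p.1 p.2} = Set.univ := by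
    refine Set.eq_univ_of_forall fun ⟨s, c⟩ => ?_
    let a : ℕ → Bool := fun i => if hi : i < h then s ⟨i, hi⟩ else c
    have hs : (fun i : Fin h => a i) = s := funext fun i => by simp [a]
    refine ⟨treePolicy a, ⟨a, rfl⟩, by rw [treeMDP_traj_treePolicy, hs], ?_⟩
    rw [← hs, treePolicy, if_pos fun _ => rfl]
    simp [a]
  rw [Creach, hall, Set.ncard_univ]
  simp [pow_succ]

theorem spanCap_treeClass {H : ℕ} (hH : 1 ≤ H) : spanCap H TreeState Bool treeClass = 2 ^ H := by
  refine IsGreatest.csSup_eq ⟨⟨H - 1, by omega, treeMDP, ?_⟩, ?_⟩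
  · rw [creach_treeMDP, Nat.sub_add_cancel hH]
  · rintro _ ⟨h, hh, M, rfl⟩
    exact (creach_treeClass_le M h).trans (Nat.pow_le_pow_right two_pos hh)

theorem treeCore_eq_insert_image (H : ℕ) :
    treeCore H = insert (fun _ _ => false)
      ((fun h i (_ : TreeState i) => decide (i = h)) '' Set.Iio H) := by
  simp only [treeCore, Set.image, Set.mem_Iio, eq_comm]

theorem finite_treeCore (H : ℕ) : (treeCore H).Finite := by
  rw [treeCore_eq_insert_image]
  exact ((Set.finite_Iio H).image _).insert _

theorem ncard_treeCore_le (H : ℕ) : (treeCore H).ncard ≤ H + 1 := by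
  rw [treeCore_eq_insert_image]
  calc _ ≤ ((fun h i (_ : TreeState i) => decide (i = h)) '' Set.Iio H).ncard + 1 :=
        Set.ncard_insert_le _ _
    _ ≤ (Set.Iio H).ncard + 1 := by gcongr; exact Set.ncard_image_le (Set.finite_Iio H)
    _ = H + 1 := by rw [Set.ncard_Iio_nat]

theorem pathSet_eq_image (H : ℕ) (a : ℕ → Bool) :
    pathSet H a = (fun h => (⟨h, fun i => a i⟩ : (i : ℕ) × TreeState i)) '' Set.Iio H := by
  ext ⟨h, s⟩
  simp only [pathSet, Set.mem_ofPred_eq, Set.mem_image, Set.mem_Iio, Sigma.mk.injEq]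
  constructor
  · rintro ⟨hh, hs⟩
    exact ⟨h, hh, rfl, heq_of_eq (funext fun i => (hs i).symm)⟩
  · rintro ⟨h, hh, rfl, hs⟩
    exact ⟨hh, fun i => by rw [← eq_of_heq hs]⟩

theorem finite_pathSet (H : ℕ) (a : ℕ → Bool) : (pathSet H a).Finite := by
  rw [pathSet_eq_image]
  exact (Set.finite_Iio H).image _

theorem ncard_pathSet_le (H : ℕ) (a : ℕ → Bool) : (pathSet H a).ncard ≤ H := by
  rw [pathSet_eq_image]
  exact (Set.ncard_image_le (Set.finite_Iio H)).trans (Set.ncard_Iio_nat H).le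

theorem exists_mem_treeCore_consistent {H h h' : ℕ} (hh : h < H) (σ : ∀ i, TreeState i)
    (α : ℕ → Bool) (hzero : ∀ i, h < i → i ≤ h' → α i = false) :
    ∃ π ∈ treeCore H, Consistent π σ α h h' := by
  cases hαh : α h with
  | false =>
    refine ⟨fun _ _ => false, Set.mem_insert _ _, fun i hi hi' => ?_⟩
    rcases hi.eq_or_lt with rfl | hlt
    exacts [hαh.symm, (hzero i hlt hi').symm]
  | true =>
    refine ⟨fun i _ => decide (i = h), Or.inr ⟨h, hh, rfl⟩, fun i hi hi' => ?_⟩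
    rcases hi.eq_or_lt with rfl | hlt
    · simp [hαh]
    · simp [hzero i hlt hi', hlt.ne']

theorem isPetal_treePolicy (H : ℕ) (a : ℕ → Bool) :
    IsPetal H (treeCore H) (pathSet H a) (treePolicy a) := by
  intro h h' hhh' hh'H σ α hcons
  by_cases hvisit : ∃ i, h < i ∧ i ≤ h' ∧ ∀ j : Fin i, σ i j = a j
  · obtain ⟨i, hhi, hih', hpath⟩ := hvisit
    exact Or.inr ⟨i, hhi, hih', hih'.trans_lt hh'H, hpath⟩
  · push Not at hvisit
    refine Or.inl (exists_mem_treeCore_consistent (hhh'.trans_lt hh'H) σ α fun i hhi hih' => ?_)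
    obtain ⟨j, hj⟩ := hvisit i hhi hih'
    rw [← hcons i hhi.le hih']
    exact if_neg fun hpath => hj (hpath j)


/-- For the class `Π` of path policies on the complete binary tree of depth
`H`: (i) the spanning capacity is exactly `2^H`; and (ii) `Π` is a `(K, D)`-sunflower
with `K ≤ H + 1` and `D = H`, witnessed by the core `{π_0} ∪ {π_h : h ∈ [H]}` and the
petal sets `S_{π_a} =` (states on the path of `a`).  Thus a
`(poly(H), poly(H))`-sunflower can have spanning capacity `2^H`. -/
theorem tree_spanning_and_sunflower (H : ℕ) (hH : 1 ≤ H) :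
    spanCap H TreeState Bool treeClass = 2 ^ H ∧
      (treeCore H).ncard ≤ H + 1 ∧
      (∀ a : ℕ → Bool,
        (pathSet H a).Finite ∧ (pathSet H a).ncard ≤ H ∧
          IsPetal (S := TreeState) H (treeCore H) (pathSet H a) (treePolicy a)) ∧
      IsSunflower (S := TreeState) H (H + 1) H treeClass := by
  have hpetals : ∀ a : ℕ → Bool, (pathSet H a).Finite ∧ (pathSet H a).ncard ≤ H ∧
      IsPetal (S := TreeState) H (treeCore H) (pathSet H a) (treePolicy a) := fun a =>
    ⟨finite_pathSet H a, ncard_pathSet_le H a, isPetal_treePolicy H a⟩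
  refine ⟨spanCap_treeClass hH, ncard_treeCore_le H, hpetals,
    treeCore H, finite_treeCore H, ncard_treeCore_le H, ?_⟩
  rintro _ ⟨a, rfl⟩
  exact ⟨pathSet H a, hpetals a⟩
end

section
/- Fix ε ∈ (0, 1/10) and an integer ℓ ≥ 1, and set N = ⌊1/(6ε^ℓ)⌋. Then for every integer d with 16ℓ·log(1/ε)/ε ≤ d ≤ (1/20)·exp(1/(48·ε^{ℓ−1})), there exists a binary matrix B ∈ {0,1}^{N×d} such that: (1) every row sum of B is at least εd/2; (2) every column sum of B lies in the interval [εN/2, 2εN]; and (3) B is (k, ℓ)-block-free with k = ⌈ℓ·log d⌉ (natural logarithm). -/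
/-!
Take the entries of `B` to be independent Bernoulli(`ε`) bits. By the exponential-moment
(Chernoff) bound with `t = ∓ log 2`, a row sum falls below `εd/2` with probability at most
`exp(-εd/8)`, and a column sum leaves `[εN/2, 2εN]` with probability at most `2 exp(-εN/8)`;
a fixed `k × ℓ` block is all ones with probability `ε^(kℓ)`. For `N = ⌊1/(6ε^ℓ)⌋` and `d` in the
given range the union bound adds up to at most `1/60 + 3/10 + 1/32 < 1`, so some outcome avoids
every bad event.
-/

/-- A binary matrix `B ∈ {0,1}^{N×d}` is `(k, ℓ)`-block-free if for every `I ⊆ [N]` with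
`|I| = k` and every `J ⊆ [d]` with `|J| = ℓ` there is some `(i, j) ∈ I × J` with
`B i j = 0`; equivalently, `B` contains no `k × ℓ` all-ones submatrix. -/
def BlockFree (N d : ℕ) (B : Fin N → Fin d → Bool) (k ℓ : ℕ) : Prop :=
  ∀ I : Finset (Fin N), I.card = k → ∀ J : Finset (Fin d), J.card = ℓ →
    ∃ i ∈ I, ∃ j ∈ J, B i j = false

open Finset Real

section BernoulliProduct

variable {α : Type*} [Fintype α] {p : ℝ}

noncomputable def bernoulliWeight (p : ℝ) (g : α → Bool) : ℝ :=
  ∏ a, if g a then p else 1 - p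

lemma bernoulliWeight_nonneg (hp0 : 0 ≤ p) (hp1 : p ≤ 1) (g : α → Bool) :
    0 ≤ bernoulliWeight p g :=
  prod_nonneg fun a _ => by split <;> linarith

variable [DecidableEq α]

/-- The probability of the event `E` when the coordinates of `g : α → Bool` are independent
Bernoulli(`p`) bits. -/
noncomputable def bernoulliProb (p : ℝ) (E : (α → Bool) → Prop) : ℝ := by
  classical exact ∑ g, if E g then bernoulliWeight p g else 0

lemma sum_bernoulliWeight_mul_prod (S : Finset α) (f : α → Bool → ℝ) :
    ∑ g, bernoulliWeight p g * ∏ a ∈ S, f a (g a) =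
      ∏ a ∈ S, (p * f a true + (1 - p) * f a false) := by
  set F : α → Bool → ℝ := fun a b => (if b then p else 1 - p) * if a ∈ S then f a b else 1
  have hF (g : α → Bool) : bernoulliWeight p g * ∏ a ∈ S, f a (g a) = ∏ a, F a (g a) := by
    rw [bernoulliWeight, ← univ_inter S, ← prod_ite_mem, ← prod_mul_distrib]
  simp_rw [hF, ← Fintype.prod_sum, Fintype.sum_bool]
  rw [← univ_inter S, ← prod_ite_mem]
  refine prod_congr rfl fun a _ => ?_
  split_ifs <;> simp only [F, if_true, Bool.false_eq_true, if_false, *]; ring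

lemma sum_bernoulliWeight : ∑ g : α → Bool, bernoulliWeight p g = 1 := by
  simpa using sum_bernoulliWeight_mul_prod (p := p) ∅ fun _ _ => 1

lemma exists_not_of_bernoulliProb_lt_one {E : (α → Bool) → Prop} (h : bernoulliProb p E < 1) :
    ∃ g, ¬E g := by
  by_contra! hE
  simp [bernoulliProb, hE, sum_bernoulliWeight] at h

lemma bernoulliProb_mono (hp0 : 0 ≤ p) (hp1 : p ≤ 1) {E F : (α → Bool) → Prop}
    (h : ∀ g, E g → F g) : bernoulliProb p E ≤ bernoulliProb p F := by
  unfold bernoulliProb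
  refine sum_le_sum fun g _ => ?_
  have := bernoulliWeight_nonneg hp0 hp1 g
  split_ifs <;> simp_all

lemma bernoulliProb_or_le (hp0 : 0 ≤ p) (hp1 : p ≤ 1) (E F : (α → Bool) → Prop) :
    bernoulliProb p (fun g => E g ∨ F g) ≤ bernoulliProb p E + bernoulliProb p F := by
  unfold bernoulliProb
  rw [← sum_add_distrib]
  refine sum_le_sum fun g _ => ?_
  have := bernoulliWeight_nonneg hp0 hp1 g
  split_ifs <;> simp_all

lemma bernoulliProb_exists_le {ι : Type*} (hp0 : 0 ≤ p) (hp1 : p ≤ 1) (s : Finset ι)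
    (E : ι → (α → Bool) → Prop) :
    bernoulliProb p (fun g => ∃ i ∈ s, E i g) ≤ ∑ i ∈ s, bernoulliProb p (E i) := by
  classical
  unfold bernoulliProb
  rw [sum_comm]
  refine sum_le_sum fun g _ => ?_
  have hw := bernoulliWeight_nonneg hp0 hp1 g
  split_ifs with h
  · obtain ⟨i, hi, hE⟩ := h
    exact (if_pos hE).symm.le.trans <|
      single_le_sum (f := fun i => if E i g then _ else 0) (fun j _ => by split <;> simp [hw]) hi
  · exact sum_nonneg fun j _ => by split <;> simp [hw]

lemma bernoulliProb_forall_mem (S : Finset α) :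
    bernoulliProb p (fun g => ∀ a ∈ S, g a = true) = p ^ #S := by
  have key := sum_bernoulliWeight_mul_prod (p := p) S fun _ b => if b then 1 else 0
  simp only [prod_boole, mul_ite, mul_one, mul_zero, if_true, Bool.false_eq_true, if_false,
    add_zero, prod_const] at key
  rw [← key]
  unfold bernoulliProb
  congr!

lemma bernoulliProb_le_sum_mul (hp0 : 0 ≤ p) (hp1 : p ≤ 1) {E : (α → Bool) → Prop}
    (f : (α → Bool) → ℝ) (hf0 : ∀ g, 0 ≤ f g) (hf : ∀ g, E g → 1 ≤ f g) :
    bernoulliProb p E ≤ ∑ g, bernoulliWeight p g * f g := by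
  unfold bernoulliProb
  refine sum_le_sum fun g _ => ?_
  have hw := bernoulliWeight_nonneg hp0 hp1 g
  split_ifs with h
  · exact le_mul_of_one_le_right hw (hf g h)
  · exact mul_nonneg hw (hf0 g)

lemma sum_bernoulliWeight_mul_exp_card (S : Finset α) (t : ℝ) :
    ∑ g, bernoulliWeight p g * exp (t * #{a ∈ S | g a = true}) =
      (p * exp t + (1 - p)) ^ #S := by
  have hexp (g : α → Bool) :
      exp (t * #{a ∈ S | g a = true}) = ∏ a ∈ S, if g a then exp t else 1 := by
    rw [mul_comm, exp_nat_mul, ← prod_const, prod_filter]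
  simp_rw [hexp]
  rw [sum_bernoulliWeight_mul_prod S fun _ b => if b then exp t else 1]
  simp

lemma bernoulliProb_le_exp (hp0 : 0 ≤ p) (hp1 : p ≤ 1) (S : Finset α) (t a : ℝ) :
    bernoulliProb p (fun g => t * a ≤ t * #{x ∈ S | g x = true}) ≤
      exp (#S * (p * (exp t - 1)) - t * a) := by
  calc _ ≤ ∑ g, bernoulliWeight p g * (exp (-(t * a)) * exp (t * #{x ∈ S | g x = true})) :=
        bernoulliProb_le_sum_mul hp0 hp1 _ (fun g => by positivity) fun g hg => by
          rw [← exp_add]; exact one_le_exp (by linarith)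
    _ = exp (-(t * a)) * (p * exp t + (1 - p)) ^ #S := by
        simp_rw [mul_left_comm _ (exp (-(t * a))), ← mul_sum, sum_bernoulliWeight_mul_exp_card]
    _ ≤ exp (-(t * a)) * exp (p * (exp t - 1)) ^ #S := by
        gcongr
        linarith [add_one_le_exp (p * (exp t - 1))]
    _ = _ := by rw [← exp_nat_mul, ← exp_add]; ring_nf

lemma bernoulliProb_card_lt_le (hp0 : 0 ≤ p) (hp1 : p ≤ 1) (S : Finset α) :
    bernoulliProb p (fun g => (#{x ∈ S | g x = true} : ℝ) < p * #S / 2) ≤ exp (-(#S * p) / 8) := by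
  have hpS : 0 ≤ (#S : ℝ) * p := by positivity
  calc _ ≤ bernoulliProb p (fun g => -log 2 * (p * #S / 2) ≤ -log 2 * #{x ∈ S | g x = true}) :=
        bernoulliProb_mono hp0 hp1 fun g hg => by nlinarith [log_two_gt_d9]
    _ ≤ _ := bernoulliProb_le_exp hp0 hp1 S _ _
    _ ≤ _ := by
        rw [exp_neg, exp_log two_pos, exp_le_exp]
        nlinarith [log_two_lt_d9]

lemma bernoulliProb_lt_card_le (hp0 : 0 ≤ p) (hp1 : p ≤ 1) (S : Finset α) :
    bernoulliProb p (fun g => 2 * p * #S < (#{x ∈ S | g x = true} : ℝ)) ≤ exp (-(#S * p) / 8) := by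
  have hpS : 0 ≤ (#S : ℝ) * p := by positivity
  calc _ ≤ bernoulliProb p (fun g => log 2 * (2 * p * #S) ≤ log 2 * #{x ∈ S | g x = true}) :=
        bernoulliProb_mono hp0 hp1 fun g hg => by nlinarith [log_two_gt_d9]
    _ ≤ _ := bernoulliProb_le_exp hp0 hp1 S _ _
    _ ≤ _ := by
        rw [exp_log two_pos, exp_le_exp]
        nlinarith [log_two_gt_d9]

end BernoulliProduct

section MatrixEvents

variable {α β : Type*} [Fintype α] [Fintype β] [DecidableEq α] [DecidableEq β] {p : ℝ}

lemma bernoulliProb_row_card_lt_le (hp0 : 0 ≤ p) (hp1 : p ≤ 1) (a : α) :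
    bernoulliProb p (fun g : α × β → Bool =>
        (#{b | g (a, b) = true} : ℝ) < p * Fintype.card β / 2) ≤
      exp (-(Fintype.card β * p) / 8) := by
  simpa [filter_map] using bernoulliProb_card_lt_le hp0 hp1 (univ.map (.sectR a β))

lemma bernoulliProb_col_card_lt_or_lt_le (hp0 : 0 ≤ p) (hp1 : p ≤ 1) (b : β) :
    bernoulliProb p (fun g : α × β → Bool =>
        (#{a | g (a, b) = true} : ℝ) < p * Fintype.card α / 2 ∨
          2 * p * Fintype.card α < (#{a | g (a, b) = true} : ℝ)) ≤
      2 * exp (-(Fintype.card α * p) / 8) := by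
  refine (bernoulliProb_or_le hp0 hp1 _ _).trans ((add_le_add ?_ ?_).trans_eq (two_mul _).symm)
  · simpa [filter_map] using bernoulliProb_card_lt_le hp0 hp1 (univ.map (.sectL α b))
  · simpa [filter_map] using bernoulliProb_lt_card_le hp0 hp1 (univ.map (.sectL α b))

lemma bernoulliProb_exists_block_le (hp0 : 0 ≤ p) (hp1 : p ≤ 1) (k ℓ : ℕ) :
    bernoulliProb p (fun g : α × β → Bool => ∃ I ∈ powersetCard k (univ : Finset α),
        ∃ J ∈ powersetCard ℓ (univ : Finset β), ∀ x ∈ I ×ˢ J, g x = true) ≤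
      (Fintype.card α).choose k * (Fintype.card β).choose ℓ * p ^ (k * ℓ) := by
  calc _ ≤ ∑ I ∈ powersetCard k (univ : Finset α), bernoulliProb p (fun g : α × β → Bool =>
          ∃ J ∈ powersetCard ℓ (univ : Finset β), ∀ x ∈ I ×ˢ J, g x = true) :=
        bernoulliProb_exists_le hp0 hp1 _ _
    _ ≤ ∑ I ∈ powersetCard k (univ : Finset α), ∑ J ∈ powersetCard ℓ (univ : Finset β),
          p ^ (k * ℓ) := by
        gcongr with I hI
        refine (bernoulliProb_exists_le hp0 hp1 _ _).trans_eq (sum_congr rfl fun J hJ => ?_)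
        rw [bernoulliProb_forall_mem, card_product, mem_powersetCard_univ.1 hI,
          mem_powersetCard_univ.1 hJ]
    _ = _ := by simp [mul_assoc]

end MatrixEvents

theorem exists_blockFree_of_sum_lt_one {p : ℝ} (hp0 : 0 ≤ p) (hp1 : p ≤ 1) {N d k ℓ : ℕ}
    (h : N * exp (-(d * p) / 8) + d * (2 * exp (-(N * p) / 8)) +
      N.choose k * d.choose ℓ * p ^ (k * ℓ) < 1) :
    ∃ B : Fin N → Fin d → Bool,
      (∀ i, p * d / 2 ≤ (#{j | B i j = true} : ℝ)) ∧
      (∀ j, p * N / 2 ≤ (#{i | B i j = true} : ℝ) ∧ (#{i | B i j = true} : ℝ) ≤ 2 * p * N) ∧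
      BlockFree N d B k ℓ := by
  obtain ⟨g, hg⟩ := exists_not_of_bernoulliProb_lt_one (p := p)
    (E := fun g : Fin N × Fin d → Bool =>
      (∃ i ∈ univ, (#{j | g (i, j) = true} : ℝ) < p * d / 2) ∨
      (∃ j ∈ univ, (#{i | g (i, j) = true} : ℝ) < p * N / 2 ∨
        2 * p * N < (#{i | g (i, j) = true} : ℝ)) ∨
      ∃ I ∈ powersetCard k univ, ∃ J ∈ powersetCard ℓ univ, ∀ x ∈ I ×ˢ J, g x = true) <| by
    refine lt_of_le_of_lt ?_ h
    grw [bernoulliProb_or_le hp0 hp1, bernoulliProb_or_le hp0 hp1, ← add_assoc,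
      bernoulliProb_exists_le hp0 hp1, bernoulliProb_exists_le hp0 hp1]
    gcongr
    · refine (sum_le_sum (g := fun _ => exp (-(d * p) / 8)) fun i _ => ?_).trans_eq (by simp)
      simpa using bernoulliProb_row_card_lt_le (β := Fin d) hp0 hp1 i
    · refine (sum_le_sum (g := fun _ => 2 * exp (-(N * p) / 8)) fun j _ => ?_).trans_eq (by simp)
      simpa using bernoulliProb_col_card_lt_or_lt_le (α := Fin N) hp0 hp1 j
    · simpa using bernoulliProb_exists_block_le (α := Fin N) (β := Fin d) hp0 hp1 k ℓ
  simp only [not_or, not_exists, not_and, not_lt, mem_univ, true_implies] at hg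
  obtain ⟨hrow, hcol, hblock⟩ := hg
  refine ⟨fun i j => g (i, j), hrow, fun j => ⟨(hcol j).1, (hcol j).2⟩, fun I hI J hJ => ?_⟩
  obtain ⟨⟨i, j⟩, hx, hg⟩ := not_forall₂.1 <|
    hblock I (mem_powersetCard_univ.2 hI) J (mem_powersetCard_univ.2 hJ)
  exact ⟨i, (mem_product.1 hx).1, j, (mem_product.1 hx).2, by simpa using hg⟩

section TailEstimates

variable {ε : ℝ} {ℓ N d k : ℕ}

lemma row_tail_le (hε0 : 0 < ε) (hε1 : ε < 1 / 10) (hℓ : 1 ≤ ℓ) (hNε : N * ε ^ ℓ ≤ 1 / 6)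
    (hd : 16 * ℓ * log (1 / ε) / ε ≤ d) :
    N * exp (-(d * ε) / 8) ≤ 1 / 60 := by
  have hexp : exp (-(d * ε) / 8) ≤ ε ^ ℓ * ε ^ ℓ := by
    rw [← pow_add, ← exp_log (pow_pos hε0 _), log_pow, exp_le_exp]
    rw [div_le_iff₀ hε0, one_div, log_inv] at hd
    push_cast
    linarith
  have hεℓ : ε ^ ℓ ≤ 1 / 10 := (pow_le_of_le_one hε0.le (by linarith) (by omega)).trans hε1.le
  calc N * exp (-(d * ε) / 8) ≤ (N * ε ^ ℓ) * ε ^ ℓ := by rw [mul_assoc]; gcongr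
    _ ≤ 1 / 6 * (1 / 10) := by gcongr
    _ = 1 / 60 := by norm_num

lemma col_tail_le (hε0 : 0 < ε) (hε1 : ε ≤ 1) (hℓ : 1 ≤ ℓ) (hN : N = ⌊1 / (6 * ε ^ ℓ)⌋₊)
    (hd : d ≤ 1 / 20 * exp (1 / (48 * ε ^ (ℓ - 1)))) :
    d * (2 * exp (-(N * ε) / 8)) ≤ 3 / 10 := by
  have hεℓ : ε ^ ℓ = ε * ε ^ (ℓ - 1) := by rw [← pow_succ', Nat.sub_add_cancel hℓ]
  have hNε : 1 / (6 * ε ^ (ℓ - 1)) - ε ≤ N * ε := by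
    have h := Nat.lt_floor_add_one (1 / (6 * ε ^ ℓ))
    rw [← hN] at h
    calc 1 / (6 * ε ^ (ℓ - 1)) - ε = ε * (1 / (6 * ε ^ ℓ)) - ε := by rw [hεℓ]; field_simp
      _ ≤ ε * (N + 1) - ε := by gcongr
      _ = N * ε := by ring
  calc d * (2 * exp (-(N * ε) / 8))
      ≤ 1 / 20 * exp (1 / (48 * ε ^ (ℓ - 1))) * (2 * exp (-(1 / (6 * ε ^ (ℓ - 1)) - ε) / 8)) := by
        gcongr
    _ = exp (ε / 8) / 10 := by
        have : 1 / (48 * ε ^ (ℓ - 1)) + -(1 / (6 * ε ^ (ℓ - 1)) - ε) / 8 = ε / 8 := by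
          field_simp
          ring
        rw [mul_mul_mul_comm, ← exp_add, this]
        ring
    _ ≤ exp 1 / 10 := by gcongr; linarith
    _ ≤ 3 / 10 := by linarith [exp_one_lt_d9]

lemma block_tail_le (hε0 : 0 < ε) (hℓ : 1 ≤ ℓ) (hNε : N * ε ^ ℓ ≤ 1 / 6) (hd : 81 ≤ (d : ℝ))
    (hk : ℓ * log d ≤ k) :
    N.choose k * d.choose ℓ * ε ^ (k * ℓ) ≤ 1 / 32 := by
  have hlogd : 4 < log d := by
    rw [lt_log_iff_exp_lt (by linarith)]
    calc exp 4 = exp 1 ^ 4 := by rw [exp_one_pow]; norm_num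
      _ < 3 ^ 4 := by gcongr; linarith [exp_one_lt_d9]
      _ ≤ d := by linarith
  have hk5 : 5 ≤ k := by
    have : (4 : ℝ) < k := by nlinarith [(Nat.one_le_cast (α := ℝ)).2 hℓ]
    exact_mod_cast this
  have hdk : (d : ℝ) ^ ℓ ≤ 3 ^ k := by
    calc (d : ℝ) ^ ℓ = exp (ℓ * log d) := by rw [← log_pow, exp_log (by positivity)]
      _ ≤ exp k := exp_le_exp.2 hk
      _ = exp 1 ^ k := by rw [← exp_nat_mul, mul_one]
      _ ≤ 3 ^ k := by gcongr; linarith [exp_one_lt_d9]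
  calc N.choose k * d.choose ℓ * ε ^ (k * ℓ) ≤ N ^ k * d ^ ℓ * ε ^ (k * ℓ) := by
        gcongr <;> exact_mod_cast Nat.choose_le_pow _ _
    _ = (N * ε ^ ℓ) ^ k * d ^ ℓ := by rw [mul_pow, ← pow_mul, mul_comm ℓ k]; ring
    _ ≤ (1 / 6) ^ k * 3 ^ k := by gcongr
    _ = (1 / 2) ^ k := by rw [← mul_pow]; norm_num
    _ ≤ (1 / 2) ^ 5 := pow_le_pow_of_le_one (by norm_num) (by norm_num) hk5
    _ = 1 / 32 := by norm_num

end TailEstimates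

/-- Fix `ε ∈ (0, 1/10)`, an integer `ℓ ≥ 1`, and set `N = ⌊1/(6ε^ℓ)⌋`.
For every integer `d` with `16·ℓ·log(1/ε)/ε ≤ d ≤ (1/20)·exp(1/(48·ε^{ℓ−1}))`, there is a
binary matrix `B ∈ {0,1}^{N×d}` such that (1) every row sum is at least `εd/2`;
(2) every column sum lies in `[εN/2, 2εN]`; and (3) `B` is `(k, ℓ)`-block-free with
`k = ⌈ℓ·log d⌉` (natural logarithm). -/
theorem exists_blockFree_matrix (ε : ℝ) (hε0 : 0 < ε) (hε1 : ε < 1 / 10)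
    (ℓ : ℕ) (hℓ : 1 ≤ ℓ) (N : ℕ) (hN : N = ⌊1 / (6 * ε ^ ℓ)⌋₊)
    (d : ℕ) (hd1 : 16 * ℓ * Real.log (1 / ε) / ε ≤ (d : ℝ))
    (hd2 : (d : ℝ) ≤ (1 / 20) * Real.exp (1 / (48 * ε ^ (ℓ - 1)))) :
    ∃ B : Fin N → Fin d → Bool,
      (∀ i : Fin N,
        ε * d / 2 ≤ ((Finset.univ.filter fun j : Fin d => B i j = true).card : ℝ)) ∧
      (∀ j : Fin d,
        ε * N / 2 ≤ ((Finset.univ.filter fun i : Fin N => B i j = true).card : ℝ) ∧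
        ((Finset.univ.filter fun i : Fin N => B i j = true).card : ℝ) ≤ 2 * ε * N) ∧
      BlockFree N d B ⌈(ℓ : ℝ) * Real.log d⌉₊ ℓ := by
  have hNε : N * ε ^ ℓ ≤ 1 / 6 := by
    have hN' := Nat.floor_le (a := 1 / (6 * ε ^ ℓ)) (by positivity)
    rw [← hN] at hN'
    calc N * ε ^ ℓ ≤ 1 / (6 * ε ^ ℓ) * ε ^ ℓ := by gcongr
      _ = 1 / 6 := by field_simp
  have hd : 81 ≤ (d : ℝ) := by
    have hlog : 1 ≤ log (1 / ε) := by
      rw [le_log_iff_exp_le (by positivity), le_div_iff₀ hε0]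
      nlinarith [exp_one_lt_d9]
    calc (81 : ℝ) ≤ 16 * 1 * 1 / (1 / 10) := by norm_num
      _ ≤ 16 * ℓ * log (1 / ε) / ε := by gcongr; exact_mod_cast hℓ
      _ ≤ d := hd1
  refine exists_blockFree_of_sum_lt_one hε0.le (by linarith) ?_
  linarith [row_tail_le hε0 hε1 hℓ hNε hd1, col_tail_le hε0 (by linarith) hℓ hN hd2,
    block_tail_le hε0 hℓ hNε hd (Nat.le_ceil _)]
end

section
/- Let Π be a nonempty policy class over the grid state space with binary actions satisfying stationarity. Then min{dim_S(Π), H + 1} ≤ 𝔠(Π), where dim_S(Π) is the star number of Π. -/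
/-- The policy class `P` over the grid state space is stationary: every policy takes the
same action on the states `s_(j,1), …, s_(j,H)` of a given index `j` (here: on `s_(j,h)`
for every layer `h`).  We write `π 0 j` for this common value `π(j)`. -/
def Stationary (K : ℕ) (P : Set (∀ _ : ℕ, Fin K → Bool)) : Prop :=
  ∀ π ∈ P, ∀ j : Fin K, ∀ h h' : ℕ, π h j = π h' j

/-- A star witness of length `N` for the class `P` with respect to the base policy `πb`:
indices `j_1, …, j_N` and policies `π_1, …, π_N ∈ P` such that for every `l`,
`π_l(j_l) ≠ π̄(j_l)` while `π_l(j_k) = π̄(j_k)` for every `k ≠ l`. -/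
def StarWitness (K : ℕ) (P : Set (∀ _ : ℕ, Fin K → Bool))
    (πb : ∀ _ : ℕ, Fin K → Bool) (N : ℕ) : Prop :=
  ∃ (j : Fin N → Fin K) (p : Fin N → ∀ _ : ℕ, Fin K → Bool),
    (∀ l : Fin N, p l ∈ P) ∧
    ∀ l : Fin N, p l 0 (j l) ≠ πb 0 (j l) ∧
      ∀ k : Fin N, k ≠ l → p l 0 (j k) = πb 0 (j k)

/-- The star number `dim_S(P) = sup_{π̄ ∈ P} dim_S(P; π̄)`: the length of the longest star
witness with respect to some base policy of `P`. -/
noncomputable def dimS (K : ℕ) (P : Set (∀ _ : ℕ, Fin K → Bool)) : ℕ :=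
  sSup {N : ℕ | ∃ πb ∈ P, StarWitness K P πb N}

/-!
Take a star of length `N` around the base policy `π̄` with indices `j_1, …, j_N`, and let
`m + 1 = min N H`. In the deterministic MDP that moves from `s_(j_h, h)` to `s_(j_(h+1), h+1)`
when the action is `π̄(j_h)` and stays on the same index otherwise, `π̄` walks along
`j_1, …, j_(m+1)`, while `π_l` (for `l ≤ m + 1`) follows it up to `j_l` and, being stationary,
keeps deviating there forever. At layer `m + 1` this reaches the `m + 2` distinct pairs
`(j_l, π_l(j_l))` and `(j_(m+1), π̄(j_(m+1)))`, and `m + 2 ≥ min N (H + 1)`.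
-/

open Set

section ChainMDP

variable {α A : Type} [DecidableEq α] [DecidableEq A]

/-- Following `b` at the checkpoint `c h` of layer `h` moves on to `c (h + 1)`; every other
state-action pair leaves the state unchanged. -/
def chainMDP (c : ℕ → α) (b : α → A) : DetMDP (fun _ => α) A where
  start := c 0
  step h s a := if s = c h ∧ a = b s then c (h + 1) else s

variable {c : ℕ → α} {b : α → A} {π : ∀ _ : ℕ, α → A}

theorem chainMDP_traj_of_follow {n : ℕ} (hπ : ∀ h < n, π h (c h) = b (c h)) :
    ∀ h ≤ n, (chainMDP c b).traj π h = c h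
  | 0, _ => rfl
  | h + 1, hh => by
    have ih := chainMDP_traj_of_follow hπ h (by omega)
    simp only [DetMDP.traj, ih]
    exact if_pos ⟨rfl, hπ h hh⟩

theorem chainMDP_traj_of_deviate {l : ℕ} (hπ : ∀ h < l, π h (c h) = b (c h))
    (hdev : ∀ h, π h (c l) ≠ b (c l)) {h : ℕ} (hlh : l ≤ h) :
    (chainMDP c b).traj π h = c l := by
  induction h, hlh using Nat.le_induction with
  | base => exact chainMDP_traj_of_follow hπ l le_rfl
  | succ h _ ih =>
    simp only [DetMDP.traj, ih]
    exact if_neg fun hstep => hdev h hstep.2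

end ChainMDP

theorem injOn_of_star {ι α β : Type*} {s : Set ι} {j : ι → α} {f : ι → α → β} {g : α → β}
    (hdev : ∀ l ∈ s, f l (j l) ≠ g (j l))
    (hagree : ∀ l ∈ s, ∀ k ∈ s, k ≠ l → f l (j k) = g (j k)) : InjOn j s := by
  intro k hk l hl hkl
  by_contra hne
  exact hdev l hl (hkl ▸ hagree l hl k hk hne)

theorem add_two_le_creach_chainMDP {α A : Type} [DecidableEq α] [DecidableEq A] [Finite α]
    [Finite A] {P : Set (∀ _ : ℕ, α → A)} (hstat : ∀ π ∈ P, ∀ h s, π h s = π 0 s)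
    {πb : ∀ _ : ℕ, α → A} (hπb : πb ∈ P) {c : ℕ → α} {q : ℕ → ∀ _ : ℕ, α → A} {n m : ℕ}
    (hq : ∀ l < n, q l ∈ P ∧ q l 0 (c l) ≠ πb 0 (c l) ∧
      ∀ k < n, k ≠ l → q l 0 (c k) = πb 0 (c k))
    (hmn : m < n) :
    m + 2 ≤ Creach (chainMDP c (πb 0)) P m := by
  have hreach_base : Reachable (chainMDP c (πb 0)) P m (c m) (πb 0 (c m)) :=
    ⟨πb, hπb, chainMDP_traj_of_follow (fun h _ => hstat πb hπb h _) m le_rfl,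
      hstat πb hπb m _⟩
  have hreach_dev : ∀ l ≤ m, Reachable (chainMDP c (πb 0)) P m (c l) (q l 0 (c l)) := by
    intro l hl
    obtain ⟨hqP, hqdev, hqagree⟩ := hq l (by omega)
    refine ⟨q l, hqP, chainMDP_traj_of_deviate (fun h hh => ?_) (fun h => ?_) hl,
      hstat _ hqP m _⟩
    · rw [hstat _ hqP]
      exact hqagree h (by omega) hh.ne
    · rwa [hstat _ hqP]
  have hinj : InjOn (fun l => (c l, q l 0 (c l))) (Iic m) := by
    refine InjOn.of_comp (g := Prod.fst) (InjOn.mono (Iic_subset_Iio.2 hmn) ?_)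
    exact injOn_of_star (fun l hl => (hq l hl).2.1) (fun l hl k hk => (hq l hl).2.2 k hk)
  have hnotMem : (c m, πb 0 (c m)) ∉ (fun l => (c l, q l 0 (c l))) '' Iic m := by
    rintro ⟨l, hl, hlm⟩
    simp only [Prod.mk.injEq] at hlm
    exact (hq l (by rw [mem_Iic] at hl; omega)).2.1 (hlm.1 ▸ hlm.2)
  calc m + 2 = (insert (c m, πb 0 (c m)) ((fun l => (c l, q l 0 (c l))) '' Iic m)).ncard := by
        rw [ncard_insert_of_notMem hnotMem, hinj.ncard_image, ncard_Iic_nat]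
    _ ≤ Creach (chainMDP c (πb 0)) P m := by
        refine ncard_le_ncard ?_ (toFinite _)
        rintro _ (rfl | ⟨l, hl, rfl⟩)
        exacts [hreach_base, hreach_dev l hl]

theorem creach_le_spanCap {S : ℕ → Type} {A : Type} [∀ h, Finite (S h)] [Finite A] {H h : ℕ}
    (hh : h < H) (M : DetMDP S A) (P : Set (∀ h : ℕ, S h → A)) :
    Creach M P h ≤ spanCap H S A P := by
  refine le_csSup ⟨∑ k ∈ Finset.range H, Nat.card (S k × A), ?_⟩ ⟨h, hh, M, rfl⟩
  rintro _ ⟨k, hk, M', rfl⟩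
  exact (ncard_le_card _).trans <| Finset.single_le_sum (f := fun k => Nat.card (S k × A))
    (fun _ _ => Nat.zero_le _) (Finset.mem_range.2 hk)

section StarNumber

variable {K : ℕ} {P : Set (∀ _ : ℕ, Fin K → Bool)} {πb : ∀ _ : ℕ, Fin K → Bool} {N : ℕ}

theorem StarWitness.le (hw : StarWitness K P πb N) : N ≤ K := by
  obtain ⟨j, p, -, hstar⟩ := hw
  have hj : InjOn j univ :=
    injOn_of_star (fun l _ => (hstar l).1) (fun l _ k _ => (hstar l).2 k)
  simpa using Fintype.card_le_of_injective j (injOn_univ.mp hj)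

theorem exists_starWitness_dimS (hP : 0 < dimS K P) :
    ∃ πb ∈ P, StarWitness K P πb (dimS K P) := by
  refine Nat.sSup_mem (s := {N | ∃ πb ∈ P, StarWitness K P πb N})
    (nonempty_iff_ne_empty.2 fun h => ?_) ⟨K, ?_⟩
  · simp [dimS, h] at hP
  · rintro _ ⟨_, _, hw⟩
    exact hw.le

theorem StarWitness.exists_nat_indexed (hw : StarWitness K P πb N) (hN : 0 < N) :
    ∃ (c : ℕ → Fin K) (q : ℕ → ∀ _ : ℕ, Fin K → Bool), ∀ l < N, q l ∈ P ∧
      q l 0 (c l) ≠ πb 0 (c l) ∧ ∀ k < N, k ≠ l → q l 0 (c k) = πb 0 (c k) := by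
  obtain ⟨j, p, hpP, hstar⟩ := hw
  refine ⟨Function.extend Fin.val j fun _ => j ⟨0, hN⟩,
    Function.extend Fin.val p fun _ => πb, fun l hl => ?_⟩
  have hc (l : Fin N) := Fin.val_injective.extend_apply j (fun _ => j ⟨0, hN⟩) l
  have hq (l : Fin N) := Fin.val_injective.extend_apply p (fun _ => πb) l
  lift l to Fin N using hl
  refine ⟨hq l ▸ hpP l, hc l ▸ hq l ▸ (hstar l).1, fun k hk hkl => ?_⟩
  lift k to Fin N using hk
  rw [hc, hq]
  exact (hstar l).2 k (Fin.val_ne_iff.1 hkl)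

end StarNumber

theorem star_le_spanCap_general (K H : ℕ) (hH : 1 ≤ H)
    (P : Set (∀ _ : ℕ, Fin K → Bool)) (hstat : Stationary K P) :
    min (dimS K P) (H + 1) ≤ spanCap H (fun _ => Fin K) Bool P := by
  rcases Nat.eq_zero_or_pos (dimS K P) with hN | hN
  · omega
  obtain ⟨πb, hπb, hw⟩ := exists_starWitness_dimS hN
  obtain ⟨c, q, hq⟩ := hw.exists_nat_indexed hN
  calc min (dimS K P) (H + 1) ≤ (min (dimS K P) H - 1) + 2 := by omega
    _ ≤ Creach (chainMDP c (πb 0)) P (min (dimS K P) H - 1) :=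
        add_two_le_creach_chainMDP (fun π hπ h s => hstat π hπ s h 0) hπb hq (by omega)
    _ ≤ spanCap H (fun _ => Fin K) Bool P := creach_le_spanCap (by omega) _ _

/-- For every nonempty stationary policy class `P` over the grid state
space with binary actions, `min {dim_S(P), H + 1} ≤ 𝔠(P)`. -/
theorem star_le_spanCap (K H : ℕ) (hH : 1 ≤ H) (hK : 1 ≤ K)
    (P : Set (∀ _ : ℕ, Fin K → Bool)) (hne : P.Nonempty) (hstat : Stationary K P) :
    min (dimS K P) (H + 1) ≤ spanCap H (fun _ => Fin K) Bool P :=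
  star_le_spanCap_general K H hH P hstat
end

section
/- Let Π be a nonempty policy class over the grid state space with binary actions satisfying stationarity. Then min{2^{⌊log₂ dim_T(Π)⌋}, 2^H} ≤ 𝔠(Π), where dim_T(Π) is the threshold dimension of Π. -/
/-- A threshold witness of length `N` for the class `P` with respect to the base policy
`πb`: indices `j_1, …, j_N` and policies `π_1, …, π_N ∈ P` such that for every `l`,
`π_l(j_m) ≠ π̄(j_m)` for all `m ≥ l` while `π_l(j_k) = π̄(j_k)` for all `k < l`. -/
def ThresholdWitness (K : ℕ) (P : Set (∀ _ : ℕ, Fin K → Bool))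
    (πb : ∀ _ : ℕ, Fin K → Bool) (N : ℕ) : Prop :=
  ∃ (j : Fin N → Fin K) (p : Fin N → ∀ _ : ℕ, Fin K → Bool),
    (∀ l : Fin N, p l ∈ P) ∧
    ∀ l : Fin N, (∀ m : Fin N, l ≤ m → p l 0 (j m) ≠ πb 0 (j m)) ∧
      ∀ k : Fin N, k < l → p l 0 (j k) = πb 0 (j k)

/-- The threshold dimension `dim_T(P) = sup_{π̄ ∈ P} dim_T(P; π̄)`: the length of the longest
threshold witness with respect to some base policy of `P`. -/
noncomputable def dimT (K : ℕ) (P : Set (∀ _ : ℕ, Fin K → Bool)) : ℕ :=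
  sSup {N : ℕ | ∃ πb ∈ P, ThresholdWitness K P πb N}

namespace DetMDP

variable {S : ℕ → Type} {A : Type}

theorem card_le_Creach {ι : Type*} [Finite A] {h : ℕ} [Finite (S h)]
    (M : DetMDP S A) {P : Set (∀ h : ℕ, S h → A)} (π : ι → ∀ h : ℕ, S h → A)
    (hπ : ∀ i, π i ∈ P)
    (hinj : Function.Injective fun i => (M.traj (π i) h, π i h (M.traj (π i) h))) :
    Nat.card ι ≤ Creach M P h := by
  rw [← Set.ncard_univ]
  exact Set.ncard_le_ncard_of_injOn _ (fun i _ => ⟨π i, hπ i, rfl, rfl⟩) hinj.injOn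

theorem le_spanCap [∀ h, Finite (S h)] [Finite A] {H h n : ℕ} {M : DetMDP S A}
    {P : Set (∀ h : ℕ, S h → A)} (hh : h < H) (hn : n ≤ Creach M P h) :
    n ≤ spanCap H S A P := by
  refine hn.trans (le_csSup ⟨(Finset.range H).sup fun h => Nat.card (S h × A), ?_⟩
    ⟨h, hh, M, rfl⟩)
  rintro _ ⟨h', hh', M', rfl⟩
  exact (Set.ncard_le_card _).trans
    (Finset.le_sup (f := fun h => Nat.card (S h × A)) (Finset.mem_range.2 hh'))

end DetMDP

/-- The window `(n - 2 ^ e, n + 2 ^ e]` of a node `n` at height `e` of the search tree lies in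
`[0, N)` and contains the threshold `l`. -/
def Brackets (N e n l : ℕ) : Prop :=
  2 ^ e ≤ n + 1 ∧ n + 2 ^ e ≤ N ∧ n < l + 2 ^ e ∧ l ≤ n + 2 ^ e

namespace Brackets

variable {N e n l : ℕ}

theorem root (hl : l < 2 ^ (e + 1)) (hN : 2 ^ (e + 1) ≤ N) : Brackets N e (2 ^ e - 1) l := by
  have := Nat.one_le_two_pow (n := e)
  rw [pow_succ] at hl hN
  refine ⟨?_, ?_, ?_, ?_⟩ <;> omega

theorem child (hb : Brackets N (e + 1) n l) :
    Brackets N e (if n < l then n + 2 ^ e else n - 2 ^ e) l := by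
  obtain ⟨h₁, h₂, h₃, h₄⟩ := hb
  rw [pow_succ] at h₁ h₂ h₃ h₄
  split_ifs <;> refine ⟨?_, ?_, ?_, ?_⟩ <;> omega

theorem lt (hb : Brackets N e n l) : n < N := by
  have := Nat.one_le_two_pow (n := e)
  have := hb.2.1
  omega

theorem eq_of_lt_iff {l' : ℕ} (hl : Brackets N 0 n l) (hl' : Brackets N 0 n l')
    (h : n < l ↔ n < l') : l = l' := by
  obtain ⟨-, -, h₁, h₂⟩ := hl
  obtain ⟨-, -, h₁', h₂'⟩ := hl'
  simp only [pow_zero] at *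
  omega

end Brackets

/-- Binary search over the positions `enc 0, …, enc (2 ^ (D + 1) - 1)`, read back by `dec`:
at layer `h`, acting like `base` at position `n` moves the search right, to
`n + 2 ^ (D - h - 1)`, and otherwise left, to `n - 2 ^ (D - h - 1)`. -/
def searchMDP {σ : Type} (D : ℕ) (enc : ℕ → σ) (dec : σ → ℕ) (base : σ → Bool) :
    DetMDP (fun _ => σ) Bool where
  start := enc (2 ^ D - 1)
  step h s a := enc (if a = base s then dec s + 2 ^ (D - h - 1) else dec s - 2 ^ (D - h - 1))

theorem searchMDP_traj {σ : Type} {D N l : ℕ} {enc : ℕ → σ} {dec : σ → ℕ}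
    {base : σ → Bool} (hdec : ∀ m < N, dec (enc m) = m) {π : ∀ _ : ℕ, σ → Bool}
    (hπ : ∀ h, ∀ m < N, π h (enc m) = base (enc m) ↔ m < l)
    (hl : l < 2 ^ (D + 1)) (hN : 2 ^ (D + 1) ≤ N) :
    ∀ h ≤ D, ∃ n, Brackets N (D - h) n l ∧ (searchMDP D enc dec base).traj π h = enc n
  | 0, _ => ⟨2 ^ D - 1, Brackets.root hl hN, rfl⟩
  | h + 1, hh => by
    obtain ⟨n, hb, htraj⟩ := searchMDP_traj hdec hπ hl hN h (by omega)
    have hb' : Brackets N (D - h - 1 + 1) n l := by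
      rwa [show D - h - 1 + 1 = D - h by omega]
    refine ⟨_, hb'.child, ?_⟩
    show (searchMDP D enc dec base).step h _ _ = _
    rw [htraj]
    simp only [searchMDP, hdec n hb.lt, hπ h n hb.lt]

theorem Function.injective_of_agree_iff_lt {ι α β : Type*} [LinearOrder ι] {j : ι → α}
    {f : ι → α → β} {g : α → β} (h : ∀ l m, f l (j m) = g (j m) ↔ m < l) :
    Function.Injective j := by
  have key : ∀ a b, j a = j b → ¬ b < a := fun a b hab hlt =>
    lt_irrefl a ((h a a).1 (by rw [hab]; exact (h a b).2 hlt))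
  exact fun a b hab => le_antisymm (not_lt.1 (key a b hab)) (not_lt.1 (key b a hab.symm))

namespace ThresholdWitness

variable {K N : ℕ} {P : Set (∀ _ : ℕ, Fin K → Bool)} {πb : ∀ _ : ℕ, Fin K → Bool}

theorem exists_agree_iff_lt (hw : ThresholdWitness K P πb N) :
    ∃ (j : Fin N → Fin K) (p : Fin N → ∀ _ : ℕ, Fin K → Bool), (∀ l, p l ∈ P) ∧
      ∀ l m, p l 0 (j m) = πb 0 (j m) ↔ m < l := by
  obtain ⟨j, p, hp, hcond⟩ := hw
  refine ⟨j, p, hp, fun l m => ⟨fun h => ?_, (hcond l).2 m⟩⟩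
  exact not_le.1 fun hle => (hcond l).1 m hle h

theorem length_le (hw : ThresholdWitness K P πb N) : N ≤ K := by
  obtain ⟨j, _, -, hthr⟩ := hw.exists_agree_iff_lt
  simpa using Fintype.card_le_of_injective j (Function.injective_of_agree_iff_lt hthr)

theorem exists_two_pow_le_Creach (hstat : Stationary K P) (hw : ThresholdWitness K P πb N)
    {D : ℕ} (hN : 2 ^ (D + 1) ≤ N) :
    ∃ M : DetMDP (fun _ => Fin K) Bool, 2 ^ (D + 1) ≤ Creach M P D := by
  obtain ⟨j, p, hp, hthr⟩ := hw.exists_agree_iff_lt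
  have hj := Function.injective_of_agree_iff_lt hthr
  set enc : ℕ → Fin K :=
    Function.extend Fin.val j fun _ => j ⟨0, (Nat.two_pow_pos _).trans_le hN⟩
  set dec : Fin K → ℕ := Function.extend j Fin.val fun _ => 0
  have henc : ∀ m : Fin N, enc m = j m := Fin.val_injective.extend_apply _ _
  have hdec : ∀ m < N, dec (enc m) = m := fun m hm => by
    rw [henc ⟨m, hm⟩]
    exact hj.extend_apply _ _ _
  let q : Fin (2 ^ (D + 1)) → ∀ _ : ℕ, Fin K → Bool := fun l => p (Fin.castLE hN l)
  have hq : ∀ l h, ∀ m < N, q l h (enc m) = πb 0 (enc m) ↔ m < l := fun l h m hm => by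
    have := hthr (Fin.castLE hN l) ⟨m, hm⟩
    rwa [← hstat _ (hp _) _ h 0, ← henc ⟨m, hm⟩] at this
  choose n hb htraj using fun l => searchMDP_traj hdec (hq l) l.isLt hN D le_rfl
  simp only [Nat.sub_self] at hb
  set M := searchMDP D enc dec (πb 0)
  refine ⟨M, ?_⟩
  have hinj : Function.Injective fun l => (M.traj (q l) D, q l D (M.traj (q l) D)) := by
    intro l l' hll'
    simp only [htraj, Prod.mk.injEq] at hll'
    obtain ⟨hs, ha⟩ := hll'
    have hn : n l = n l' := by
      rw [← hdec _ (hb l).lt, ← hdec _ (hb l').lt, hs]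
    have hb' := hb l'
    rw [← hn] at ha hb'
    refine Fin.ext ((hb l).eq_of_lt_iff hb' ?_)
    rw [← hq l D _ (hb l).lt, ← hq l' D _ (hb l).lt, ha]
  simpa using DetMDP.card_le_Creach _ q (fun l => hp _) hinj

end ThresholdWitness

theorem exists_thresholdWitness_dimT {K : ℕ} {P : Set (∀ _ : ℕ, Fin K → Bool)}
    (hne : P.Nonempty) : ∃ πb ∈ P, ThresholdWitness K P πb (dimT K P) := by
  obtain ⟨π, hπ⟩ := hne
  have hw₀ : ThresholdWitness K P π 0 :=
    ⟨Fin.elim0, Fin.elim0, fun l => l.elim0, fun l => l.elim0⟩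
  exact Nat.sSup_mem (s := {N | ∃ πb ∈ P, ThresholdWitness K P πb N}) ⟨0, π, hπ, hw₀⟩
    ⟨K, fun _ ⟨_, _, hw⟩ => hw.length_le⟩

/-- For every nonempty stationary policy class `P` over the grid state
space with binary actions, `min {2^⌊log₂ dim_T(P)⌋, 2^H} ≤ 𝔠(P)`. -/
theorem threshold_le_spanCap (K H : ℕ) (hH : 1 ≤ H) (hK : 1 ≤ K)
    (P : Set (∀ _ : ℕ, Fin K → Bool)) (hne : P.Nonempty) (hstat : Stationary K P) :
    min (2 ^ (Nat.log 2 (dimT K P))) (2 ^ H) ≤ spanCap H (fun _ => Fin K) Bool P := by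
  obtain ⟨πb, -, hw⟩ := exists_thresholdWitness_dimT hne
  rw [← (pow_right_mono₀ one_le_two).map_min]
  match hD : min (Nat.log 2 (dimT K P)) H with
  | 0 =>
    obtain ⟨π, hπ⟩ := hne
    refine DetMDP.le_spanCap (M := ⟨⟨0, hK⟩, fun _ s _ => s⟩) hH ?_
    simpa using DetMDP.card_le_Creach _ (fun _ : Unit => π) (fun _ => hπ)
      (Function.injective_of_subsingleton _)
  | D + 1 =>
    obtain ⟨hlog, hDH⟩ := le_min_iff.1 hD.ge
    have hN : 2 ^ (D + 1) ≤ dimT K P := (Nat.pow_le_pow_right two_pos hlog).trans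
      (Nat.pow_log_le_self 2 fun h0 => by simp [h0] at hlog)
    obtain ⟨M, hM⟩ := hw.exists_two_pow_le_Creach hstat hN
    exact DetMDP.le_spanCap hDH hM
end

section
/- Let Π be a nonempty policy class over the grid state space with binary actions satisfying stationarity. Then 𝔠(Π) ≤ 2^{dim_E(Π)}, where dim_E(Π) is the combinatorial eluder dimension of Π. -/
/-- An eluder witness of length `N` for the class `P` with respect to the base policy `πb`:
indices `j_1, …, j_N` and policies `π_1, …, π_N ∈ P` such that for every `l`,
`π_l(j_l) ≠ π̄(j_l)` while `π_l(j_k) = π̄(j_k)` for all `k < l`. -/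
def EluderWitness (K : ℕ) (P : Set (∀ _ : ℕ, Fin K → Bool))
    (πb : ∀ _ : ℕ, Fin K → Bool) (N : ℕ) : Prop :=
  ∃ (j : Fin N → Fin K) (p : Fin N → ∀ _ : ℕ, Fin K → Bool),
    (∀ l : Fin N, p l ∈ P) ∧
    ∀ l : Fin N, p l 0 (j l) ≠ πb 0 (j l) ∧
      ∀ k : Fin N, k < l → p l 0 (j k) = πb 0 (j k)

/-- The combinatorial eluder dimension `dim_E(P) = sup_{π̄ ∈ P} dim_E(P; π̄)`: the length of
the longest eluder witness with respect to some base policy of `P`. -/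
noncomputable def dimE (K : ℕ) (P : Set (∀ _ : ℕ, Fin K → Bool)) : ℕ :=
  sSup {N : ℕ | ∃ πb ∈ P, EluderWitness K P πb N}

section Aux
variable {K : ℕ}

/-- Eluder witness for a class of action functions, ℕ-indexed. -/
def FW' (Q : Set (Fin K → Bool)) (qb : Fin K → Bool) (N : ℕ) : Prop :=
  ∃ (j : ℕ → Fin K) (p : ℕ → Fin K → Bool),
    (∀ l < N, p l ∈ Q) ∧ ∀ l < N, p l (j l) ≠ qb (j l) ∧
      ∀ k < l, p l (j k) = qb (j k)

def NoWit (Q : Set (Fin K → Bool)) (m : ℕ) : Prop := ∀ qb ∈ Q, ¬ FW' Q qb m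

lemma noWit_mono {Q Q' : Set (Fin K → Bool)} (hsub : Q' ⊆ Q) {m : ℕ}
    (h : NoWit Q m) : NoWit Q' m := by
  rintro qb hqb ⟨j, p, hp, hc⟩
  exact h qb (hsub hqb) ⟨j, p, fun l hl => hsub (hp l hl), hc⟩

lemma noWit_split {Q : Set (Fin K → Bool)} {j0 : Fin K} {b : Bool}
    {q' : Fin K → Bool} (hq' : q' ∈ Q) (hq'b : q' j0 ≠ b) {m : ℕ}
    (h : NoWit Q (m + 1)) : NoWit {q | q ∈ Q ∧ q j0 = b} m := by
  rintro qb hqb ⟨j, p, hp, hc⟩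
  apply h qb hqb.1
  refine ⟨fun n => match n with | 0 => j0 | k + 1 => j k,
          fun n => match n with | 0 => q' | k + 1 => p k, ?_, ?_⟩
  · intro l hl
    match l with
    | 0 => exact hq'
    | k + 1 => exact (hp k (by omega)).1
  · intro l hl
    match l with
    | 0 =>
      refine ⟨by simpa [hqb.2] using hq'b, ?_⟩
      intro k hk; omega
    | k + 1 =>
      refine ⟨(hc k (by omega)).1, ?_⟩
      intro k' hk'
      match k' with
      | 0 => show p k j0 = qb j0; rw [(hp k (by omega)).2, hqb.2]
      | k'' + 1 => exact (hc k (by omega)).2 k'' (by omega)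

variable (δ : ℕ → Fin K → Bool → Fin K)

/-- state after `n` steps starting from `s` at layer `m`, following `q`. -/
def stS (m : ℕ) (s : Fin K) (q : Fin K → Bool) : ℕ → Fin K
  | 0 => s
  | n + 1 => δ (m + n) (stS m s q n) (q (stS m s q n))

lemma stS_shift (m : ℕ) (s : Fin K) (q : Fin K → Bool) :
    ∀ n, stS δ m s q (n + 1) = stS δ (m + 1) (δ m s (q s)) q n := by
  intro n
  induction n with
  | zero => simp [stS]
  | succ n ih =>
    show δ (m + (n+1)) (stS δ m s q (n+1)) (q (stS δ m s q (n+1))) = _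
    rw [ih]
    show _ = δ (m + 1 + n) (stS δ (m+1) _ q n) (q (stS δ (m+1) _ q n))
    congr 1
    omega

/-- branch of length `n`. -/
def LB (m : ℕ) (s : Fin K) (q : Fin K → Bool) (n : ℕ) : List Bool :=
  List.ofFn (fun i : Fin n => q (stS δ m s q i))

lemma LB_succ (m : ℕ) (s : Fin K) (q : Fin K → Bool) (n : ℕ) :
    LB δ m s q (n + 1) = q s :: LB δ (m + 1) (δ m s (q s)) q n := by
  unfold LB
  rw [List.ofFn_succ]
  congr 1
  exact List.ofFn_inj.2 (funext fun i => by
    show q (stS δ m s q (i.val + 1)) = q (stS δ (m + 1) (δ m s (q s)) q i.val)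
    rw [stS_shift])

/-- The key counting lemma: if there is no eluder witness of length `d+1`, then any
adaptive tree of any depth has at most `2^d` realized branches. -/
lemma count_le (n : ℕ) : ∀ (d m : ℕ) (s : Fin K) (Q : Set (Fin K → Bool)),
    Q.Nonempty → NoWit Q (d + 1) →
    ((fun q => LB δ m s q n) '' Q).Finite ∧ ((fun q => LB δ m s q n) '' Q).ncard ≤ 2 ^ d := by
  induction n with
  | zero =>
    intro d m s Q hne _
    have hconst : (fun q : Fin K → Bool => LB δ m s q 0) = fun _ => ([] : List Bool) := by
      funext q; simp [LB]
    rw [hconst, Set.Nonempty.image_const hne]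
    refine ⟨Set.finite_singleton _, ?_⟩
    rw [Set.ncard_singleton]
    exact Nat.one_le_two_pow
  | succ n ih =>
    intro d m s Q hne hnw
    set Q0 : Set (Fin K → Bool) := {q | q ∈ Q ∧ q s = false} with hQ0
    set Q1 : Set (Fin K → Bool) := {q | q ∈ Q ∧ q s = true} with hQ1
    set Y0 := (fun q => LB δ (m+1) (δ m s false) q n) '' Q0 with hY0
    set Y1 := (fun q => LB δ (m+1) (δ m s true) q n) '' Q1 with hY1
    have hsplit : (fun q => LB δ m s q (n+1)) '' Q =
        (List.cons false) '' Y0 ∪ (List.cons true) '' Y1 := by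
      ext x
      constructor
      · rintro ⟨q, hq, rfl⟩
        show LB δ m s q (n+1) ∈ List.cons false '' Y0 ∪ List.cons true '' Y1
        rw [LB_succ]
        cases hb : q s
        · left
          exact ⟨LB δ (m+1) (δ m s false) q n, ⟨q, ⟨hq, hb⟩, rfl⟩, rfl⟩
        · right
          exact ⟨LB δ (m+1) (δ m s true) q n, ⟨q, ⟨hq, hb⟩, rfl⟩, rfl⟩
      · rintro (⟨y, ⟨q, hq, rfl⟩, rfl⟩ | ⟨y, ⟨q, hq, rfl⟩, rfl⟩)
        · refine ⟨q, hq.1, ?_⟩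
          show LB δ m s q (n+1) = false :: LB δ (m+1) (δ m s false) q n
          rw [LB_succ, hq.2]
        · refine ⟨q, hq.1, ?_⟩
          show LB δ m s q (n+1) = true :: LB δ (m+1) (δ m s true) q n
          rw [LB_succ, hq.2]
    have main : Y0.Finite ∧ Y1.Finite ∧ Y0.ncard + Y1.ncard ≤ 2 ^ d := by
      rcases Set.eq_empty_or_nonempty Q0 with h0 | h0
      · have h1 : Q1.Nonempty := by
          obtain ⟨q, hq⟩ := hne
          refine ⟨q, hq, ?_⟩
          by_contra hb
          exact (Set.eq_empty_iff_forall_notMem.1 h0) q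
            ⟨hq, by cases hqs : q s <;> simp_all⟩
        have h2 := ih d (m+1) (δ m s true) Q1 h1 (noWit_mono (fun q hq => hq.1) hnw)
        refine ⟨by simp [hY0, h0], h2.1, ?_⟩
        rw [hY0, hY1, h0]
        simpa using h2.2
      rcases Set.eq_empty_or_nonempty Q1 with h1 | h1
      · have h2 := ih d (m+1) (δ m s false) Q0 h0 (noWit_mono (fun q hq => hq.1) hnw)
        refine ⟨h2.1, by simp [hY1, h1], ?_⟩
        rw [hY0, hY1, h1]
        simpa using h2.2
      obtain ⟨q0, hq0⟩ := h0
      obtain ⟨q1, hq1⟩ := h1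
      match d with
      | 0 =>
        exfalso
        apply hnw q0 hq0.1
        refine ⟨fun _ => s, fun _ => q1, fun l _ => hq1.1, ?_⟩
        intro l hl
        refine ⟨by show q1 s ≠ q0 s; rw [hq0.2, hq1.2]; simp, ?_⟩
        intro k hk; omega
      | e + 1 =>
        have hw0 : NoWit Q0 (e + 1) :=
          noWit_split hq1.1 (by rw [hq1.2]; simp) hnw
        have hw1 : NoWit Q1 (e + 1) :=
          noWit_split hq0.1 (by rw [hq0.2]; simp) hnw
        have i0 := ih e (m+1) (δ m s false) Q0 ⟨q0, hq0⟩ hw0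
        have i1 := ih e (m+1) (δ m s true) Q1 ⟨q1, hq1⟩ hw1
        refine ⟨i0.1, i1.1, ?_⟩
        rw [hY0, hY1]
        have hpow : (2:ℕ) ^ e + 2 ^ e = 2 ^ (e+1) := by ring
        have b0 := i0.2
        have b1 := i1.2
        omega
    obtain ⟨f0, f1, hb⟩ := main
    constructor
    · rw [hsplit]
      exact (f0.image _).union (f1.image _)
    · rw [hsplit]
      calc ((List.cons false) '' Y0 ∪ (List.cons true) '' Y1).ncard
          ≤ ((List.cons false) '' Y0).ncard + ((List.cons true) '' Y1).ncard :=
            Set.ncard_union_le _ _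
        _ = Y0.ncard + Y1.ncard := by
            rw [Set.ncard_image_of_injective _ List.cons_injective,
              Set.ncard_image_of_injective _ List.cons_injective]
        _ ≤ 2 ^ d := hb

/-- Equal branches force equal states along the way. -/
lemma stS_eq_of {m : ℕ} {s : Fin K} {q q' : Fin K → Bool}
    (hq : ∀ i, q (stS δ m s q i) = q' (stS δ m s q' i)) :
    ∀ n, stS δ m s q n = stS δ m s q' n := by
  intro n
  induction n with
  | zero => rfl
  | succ n ih =>
    show δ (m + n) (stS δ m s q n) (q (stS δ m s q n)) =
      δ (m + n) (stS δ m s q' n) (q' (stS δ m s q' n))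
    rw [hq n, ih]

end Aux

/-- For every nonempty stationary policy class `P` over the grid state
space with binary actions, `𝔠(P) ≤ 2^{dim_E(P)}`. -/
theorem spanCap_le_eluder (K H : ℕ) (hH : 1 ≤ H) (hK : 1 ≤ K)
    (P : Set (∀ _ : ℕ, Fin K → Bool)) (hne : P.Nonempty) (hstat : Stationary K P) :
    spanCap H (fun _ => Fin K) Bool P ≤ 2 ^ dimE K P := by
  classical
  set d := dimE K P with hd
  set Q : Set (Fin K → Bool) := (fun π => π 0) '' P with hQ
  have hQne : Q.Nonempty := hne.image _
  -- no eluder witness of length d+1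
  have hnw : NoWit Q (d + 1) := by
    rintro qb ⟨πb, hπb, rfl⟩ ⟨j, p, hp, hc⟩
    -- build an EluderWitness of length d+1
    have hwit : EluderWitness K P πb (d + 1) := by
      have hch : ∀ l : Fin (d+1), ∃ π, π ∈ P ∧ π 0 = p l.val := by
        intro l
        obtain ⟨π, hπ, hπ0⟩ := hp l.val l.isLt
        exact ⟨π, hπ, hπ0⟩
      choose pp hppP hpp0 using hch
      refine ⟨fun l => j l.val, pp, hppP, ?_⟩
      intro l
      refine ⟨by rw [hpp0 l]; exact (hc l.val l.isLt).1, ?_⟩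
      intro k hk
      rw [hpp0 l]
      exact (hc l.val l.isLt).2 k.val hk
    -- the witness set is bounded above by K
    have hbdd : BddAbove {N : ℕ | ∃ πb ∈ P, EluderWitness K P πb N} := by
      refine ⟨K, ?_⟩
      rintro N ⟨π0, _, j, p, hpP, hcond⟩
      have hinj : Function.Injective j := by
        intro k l hkl
        by_contra hne'
        rcases lt_or_gt_of_ne hne' with hlt | hlt
        · have h1 := (hcond l).1
          have h2 := (hcond l).2 k hlt
          rw [hkl] at h2
          exact h1 h2
        · have h1 := (hcond k).1
          have h2 := (hcond k).2 l hlt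
          rw [← hkl] at h2
          exact h1 h2
      simpa using Fintype.card_le_of_injective j hinj
    have : d + 1 ≤ d := by
      rw [hd]
      exact le_csSup hbdd ⟨πb, hπb, hwit⟩
    omega
  -- bound each element of the spanning-capacity set
  apply csSup_le'
  rintro n ⟨h, _, M, rfl⟩
  set δ : ℕ → Fin K → Bool → Fin K := M.step with hδ
  -- trajectories of stationary policies
  have htraj : ∀ π ∈ P, ∀ n : ℕ, M.traj π n = stS δ 0 M.start (π 0) n := by
    intro π hπ n
    induction n with
    | zero => rfl
    | succ n ih =>
      show M.step n (M.traj π n) (π n (M.traj π n)) = _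
      have hst : π n (M.traj π n) = π 0 (M.traj π n) := hstat π hπ (M.traj π n) n 0
      rw [hst, ih]
      show δ n _ _ = δ (0 + n) _ _
      rw [Nat.zero_add]
  set g : (Fin K → Bool) → Fin K × Bool :=
    fun q => (stS δ 0 M.start q h, q (stS δ 0 M.start q h)) with hg
  set X := (fun q => LB δ 0 M.start q (h+1)) '' Q with hX
  obtain ⟨hXfin, hXcard⟩ := count_le δ (h+1) d 0 M.start Q hQne hnw
  rw [← hX] at hXfin hXcard
  -- the reachable set is contained in g '' Q
  have hsub : {p : Fin K × Bool | Reachable M P h p.1 p.2} ⊆ g '' Q := by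
    rintro ⟨s, a⟩ ⟨π, hπ, hts, hact⟩
    refine ⟨π 0, ⟨π, hπ, rfl⟩, ?_⟩
    simp only [hg]
    rw [← htraj π hπ h, hts]
    have : π 0 s = π h s := hstat π hπ s 0 h
    rw [this, hact]
  -- injection from reachable pairs into branches
  have key : Creach M P h ≤ X.ncard := by
    unfold Creach
    set f : Fin K × Bool → List Bool := fun pr =>
      if hpr : pr ∈ g '' Q then LB δ 0 M.start hpr.choose (h+1) else [] with hf
    apply Set.ncard_le_ncard_of_injOn f ?_ ?_ hXfin
    · intro pr hpr
      have hpr' : pr ∈ g '' Q := hsub hpr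
      rw [hf]
      simp only [dif_pos hpr']
      exact ⟨hpr'.choose, hpr'.choose_spec.1, rfl⟩
    · intro pr hpr pr' hpr' hff
      have h1 : pr ∈ g '' Q := hsub hpr
      have h2 : pr' ∈ g '' Q := hsub hpr'
      rw [hf] at hff
      simp only [dif_pos h1, dif_pos h2] at hff
      set q := h1.choose with hq1
      set q' := h2.choose with hq2
      have hgq : g q = pr := h1.choose_spec.2
      have hgq' : g q' = pr' := h2.choose_spec.2
      -- branches equal implies g values equal
      have hfn : (fun i : Fin (h+1) => q (stS δ 0 M.start q i)) =
          (fun i : Fin (h+1) => q' (stS δ 0 M.start q' i)) :=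
        List.ofFn_inj.1 hff
      have hptw : ∀ i : ℕ, i < h + 1 →
          q (stS δ 0 M.start q i) = q' (stS δ 0 M.start q' i) := by
        intro i hi
        exact congrFun hfn ⟨i, hi⟩
      have hstate : ∀ n ≤ h, stS δ 0 M.start q n = stS δ 0 M.start q' n := by
        intro n hn
        induction n with
        | zero => rfl
        | succ n ih =>
          show δ (0 + n) (stS δ 0 M.start q n) (q (stS δ 0 M.start q n)) =
            δ (0 + n) (stS δ 0 M.start q' n) (q' (stS δ 0 M.start q' n))
          rw [hptw n (by omega), ih (by omega)]
      have : g q = g q' := by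
        simp only [hg]
        rw [hptw h (by omega), hstate h le_rfl]
      rw [← hgq, ← hgq', this]
  exact key.trans hXcard
end
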